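/- arXiv:1001.3802 — 6 statements merged into one kernel-verified Lean document; each statement's English description precedes it below -/
import Mathlib

section
/- Fix d ≥ 1, symmetric d×d real matrices a̲, ā with 0 ≤ a̲ ≤ ā, and δ ≥ 0. Define Ḡ : S_d → ℝ by Ḡ(γ) := ½ · sup{ tr(γa) : a ∈ S_d, a̲ ≤ a ≤ ā }, and let F : S_d → ℝ be convex and continuous with Ḡ(γ) ≤ F(γ) ≤ Ḡ(γ) + δ for every γ ∈ S_d. For a ∈ S_d with a̲ ≤ a ≤ ā define the (finite) Legendre-type transform L(a) := sup{ ½ tr(aγ) − F(γ) : γ ∈ S_d }. Then for every γ ∈ S_d one has the dual representation F(γ) = sup{ ½ tr(aγ) − L(a) : a ∈ S_d, a̲ ≤ a ≤ ā }. -/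
open Matrix

/-- `Ḡ(γ) = ½ sup { tr(γ a) : a̲ ≤ a ≤ ā }`. -/
noncomputable def GbarFun {d : ℕ} (al au γ : Matrix (Fin d) (Fin d) ℝ) : ℝ :=
  sSup {x : ℝ | ∃ a : Matrix (Fin d) (Fin d) ℝ, a.IsSymm ∧
    (a - al).PosSemidef ∧ (au - a).PosSemidef ∧ x = (γ * a).trace} / 2

/-- The set `{ ½ tr(a γ) − F(γ) : γ ∈ S_d }` whose supremum is the Legendre-type
transform `L(a)`. -/
def legendreSet {d : ℕ} (F : Matrix (Fin d) (Fin d) ℝ → ℝ)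
    (a : Matrix (Fin d) (Fin d) ℝ) : Set ℝ :=
  {x : ℝ | ∃ γ : Matrix (Fin d) (Fin d) ℝ, γ.IsSymm ∧ x = (a * γ).trace / 2 - F γ}

section Auxiliary

variable {d : ℕ}

lemma psd_trace_nonneg {m : Matrix (Fin d) (Fin d) ℝ} (hm : m.PosSemidef) : 0 ≤ m.trace := by
  rw [Matrix.trace]
  apply Finset.sum_nonneg
  intro i _
  simpa [Matrix.mulVec_single, dotProduct_single] using hm.dotProduct_mulVec_nonneg (Pi.single i 1)

lemma psd_mul_trace_nonneg {p q : Matrix (Fin d) (Fin d) ℝ} (hp : p.PosSemidef)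
    (hq : q.PosSemidef) : 0 ≤ (p * q).trace := by
  obtain ⟨s, hs, rfl⟩ : ∃ s, sᴴ = s ∧ s * s = q :=
    open scoped MatrixOrder in
    ⟨CFC.sqrt q, (CFC.sqrt_nonneg q).isSelfAdjoint.star_eq, CFC.sqrt_mul_sqrt_self q hq.nonneg⟩
  have h : (p * (s * s)).trace = (sᴴ * p * s).trace := by
    rw [hs, ← Matrix.mul_assoc, Matrix.trace_mul_cycle]
  rw [h]
  exact psd_trace_nonneg (hp.conjTranspose_mul_mul_same s)

lemma trace_mul_vecMulVec (m : Matrix (Fin d) (Fin d) ℝ) (v : Fin d → ℝ) :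
    (m * Matrix.vecMulVec v v).trace = v ⬝ᵥ (m *ᵥ v) := by
  simp only [Matrix.trace, Matrix.diag, Matrix.mul_apply, Matrix.vecMulVec_apply,
    Matrix.mulVec, dotProduct, Finset.mul_sum]
  exact Finset.sum_congr rfl fun i _ => Finset.sum_congr rfl fun j _ => by ring

lemma vecMulVec_posSemidef (v : Fin d → ℝ) : (Matrix.vecMulVec v v).PosSemidef := by
  have : Matrix.vecMulVec v v = (Matrix.replicateRow Unit v)ᴴ * Matrix.replicateRow Unit v := by
    ext i j
    simp [Matrix.vecMulVec_apply, Matrix.mul_apply, Matrix.replicateRow_apply]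
  rw [this]
  exact Matrix.posSemidef_conjTranspose_mul_self _

lemma vecMulVec_isSymm (v : Fin d → ℝ) : (Matrix.vecMulVec v v).IsSymm := by
  ext i j
  simp [Matrix.vecMulVec_apply, Matrix.transpose_apply, mul_comm]

lemma isHermitian_of_isSymm {m : Matrix (Fin d) (Fin d) ℝ} (hm : m.IsSymm) :
    m.IsHermitian := by
  ext i j
  have := congrFun (congrFun hm i) j
  simpa [Matrix.conjTranspose_apply] using this

lemma psd_abs_entry_le_trace {m : Matrix (Fin d) (Fin d) ℝ} (hm : m.PosSemidef) (i j : Fin d) :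
    |m i j| ≤ m.trace := by
  have hdiag : ∀ k, 0 ≤ m k k := by
    intro k
    simpa [Matrix.mulVec_single, dotProduct_single] using hm.dotProduct_mulVec_nonneg (Pi.single k 1)
  have htr : ∀ k, m k k ≤ m.trace := by
    intro k
    exact Finset.single_le_sum (f := fun k => m.diag k) (fun k _ => hdiag k) (Finset.mem_univ k)
  rcases eq_or_ne i j with rfl | hij
  · rw [abs_of_nonneg (hdiag i)]; exact htr i
  · have hsym : m j i = m i j := by
      have h := hm.1
      have := congrFun (congrFun h j) i
      simpa [Matrix.conjTranspose_apply] using this.symm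
    have key : ∀ ε : ℝ, ε = 1 ∨ ε = -1 →
        0 ≤ m i i + m j j + ε * (2 * m i j) := by
      intro ε hε
      have h2 := hm.dotProduct_mulVec_nonneg (Pi.single i 1 + Pi.single j ε)
      have hmv : m *ᵥ (Pi.single i 1 + Pi.single j ε) =
          (fun k => m k i) + fun k => ε * m k j := by
        ext k
        simp [Matrix.mulVec_add, Matrix.mulVec_single, mul_comm]
      rw [hmv] at h2
      have : (0:ℝ) ≤ m i i + ε * m j i + (ε * m i j + ε * (ε * m j j)) := by
        simpa [add_dotProduct, dotProduct_add, single_dotProduct,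
          Pi.add_apply] using h2
      rcases hε with rfl | rfl
      · nlinarith [this, hsym]
      · nlinarith [this, hsym]
    have h1 := key 1 (Or.inl rfl)
    have h2 := key (-1) (Or.inr rfl)
    have : |m i j| ≤ (m i i + m j j) / 2 := by
      rw [abs_le]; constructor <;> nlinarith
    have hii := htr i
    have hjj := htr j
    have hdi := hdiag i
    have hdj := hdiag j
    nlinarith [this]

/-- The defining set of `GbarFun`. -/
def gset {d : ℕ} (al au γ : Matrix (Fin d) (Fin d) ℝ) : Set ℝ :=
  {x : ℝ | ∃ a : Matrix (Fin d) (Fin d) ℝ, a.IsSymm ∧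
    (a - al).PosSemidef ∧ (au - a).PosSemidef ∧ x = (γ * a).trace}

lemma gbarFun_eq (al au γ : Matrix (Fin d) (Fin d) ℝ) :
    GbarFun al au γ = sSup (gset al au γ) / 2 := rfl

variable {al au : Matrix (Fin d) (Fin d) ℝ}

lemma gset_nonempty (hals : al.IsSymm) (hlu : (au - al).PosSemidef)
    (γ : Matrix (Fin d) (Fin d) ℝ) : (gset al au γ).Nonempty := by
  refine ⟨(γ * al).trace, al, hals, ?_, ?_, rfl⟩
  · rw [sub_self]; exact Matrix.PosSemidef.zero
  · exact hlu

lemma gset_bddAbove (γ : Matrix (Fin d) (Fin d) ℝ) : BddAbove (gset al au γ) := by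
  refine ⟨(γ * al).trace + (∑ i, ∑ j, |γ i j|) * (au - al).trace, ?_⟩
  rintro x ⟨a, -, h1, h2, rfl⟩
  have key : (γ * a).trace = (γ * al).trace + (γ * (a - al)).trace := by
    rw [Matrix.mul_sub, Matrix.trace_sub]; ring
  rw [key]
  gcongr
  set m := a - al with hm
  have hmp : m.PosSemidef := h1
  have hmk : ((au - al) - m).PosSemidef := by
    have : (au - al) - m = au - a := by rw [hm]; abel
    rw [this]; exact h2
  have htrm : m.trace ≤ (au - al).trace := by
    have := psd_trace_nonneg hmk
    rw [Matrix.trace_sub] at this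
    linarith
  have htrm0 : 0 ≤ m.trace := psd_trace_nonneg hmp
  calc (γ * m).trace = ∑ i, ∑ j, γ i j * m j i := by
        simp [Matrix.trace, Matrix.diag, Matrix.mul_apply]
    _ ≤ ∑ i, ∑ j, |γ i j| * (au - al).trace := by
        refine Finset.sum_le_sum fun i _ => Finset.sum_le_sum fun j _ => ?_
        calc γ i j * m j i ≤ |γ i j * m j i| := le_abs_self _
          _ = |γ i j| * |m j i| := abs_mul _ _
          _ ≤ |γ i j| * (au - al).trace := by
              refine mul_le_mul_of_nonneg_left ?_ (abs_nonneg _)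
              exact le_trans (psd_abs_entry_le_trace hmp j i) htrm
    _ = (∑ i, ∑ j, |γ i j|) * (au - al).trace := by rw [Finset.sum_mul]; simp [Finset.sum_mul]

lemma le_gbar {a γ : Matrix (Fin d) (Fin d) ℝ} (has : a.IsSymm)
    (h1 : (a - al).PosSemidef) (h2 : (au - a).PosSemidef) :
    (γ * a).trace / 2 ≤ GbarFun al au γ := by
  rw [gbarFun_eq]
  have : (γ * a).trace ≤ sSup (gset al au γ) :=
    le_csSup (gset_bddAbove γ) ⟨a, has, h1, h2, rfl⟩
  linarith

lemma gbar_psd_upper (hals : al.IsSymm) (hlu : (au - al).PosSemidef)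
    {p : Matrix (Fin d) (Fin d) ℝ} (hp : p.PosSemidef) :
    GbarFun al au p ≤ (p * au).trace / 2 := by
  rw [gbarFun_eq]
  have : sSup (gset al au p) ≤ (p * au).trace := by
    refine csSup_le (gset_nonempty hals hlu p) ?_
    rintro x ⟨a, -, h1, h2, rfl⟩
    have := psd_mul_trace_nonneg hp h2
    rw [Matrix.mul_sub, Matrix.trace_sub] at this
    linarith
  linarith

lemma gbar_neg_psd_upper (hals : al.IsSymm) (hlu : (au - al).PosSemidef)
    {p : Matrix (Fin d) (Fin d) ℝ} (hp : p.PosSemidef) :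
    GbarFun al au (-p) ≤ -(p * al).trace / 2 := by
  rw [gbarFun_eq]
  have : sSup (gset al au (-p)) ≤ -(p * al).trace := by
    refine csSup_le (gset_nonempty hals hlu _) ?_
    rintro x ⟨a, -, h1, h2, rfl⟩
    have := psd_mul_trace_nonneg hp h1
    rw [Matrix.mul_sub, Matrix.trace_sub] at this
    rw [Matrix.neg_mul, Matrix.trace_neg]
    linarith
  linarith

lemma gbar_add_smul_le (hals : al.IsSymm) (hlu : (au - al).PosSemidef)
    (γ b : Matrix (Fin d) (Fin d) ℝ) {t : ℝ} (ht : 0 ≤ t) :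
    GbarFun al au (γ + t • b) ≤ GbarFun al au γ + t * GbarFun al au b := by
  simp only [gbarFun_eq]
  have : sSup (gset al au (γ + t • b)) ≤ sSup (gset al au γ) + t * sSup (gset al au b) := by
    refine csSup_le (gset_nonempty hals hlu _) ?_
    rintro x ⟨a, has, h1, h2, rfl⟩
    rw [Matrix.add_mul, Matrix.trace_add, Matrix.smul_mul, Matrix.trace_smul, smul_eq_mul]
    have hγ : (γ * a).trace ≤ sSup (gset al au γ) :=
      le_csSup (gset_bddAbove γ) ⟨a, has, h1, h2, rfl⟩
    have hb : (b * a).trace ≤ sSup (gset al au b) :=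
      le_csSup (gset_bddAbove b) ⟨a, has, h1, h2, rfl⟩
    nlinarith
  linarith

lemma exists_subgradient (f : Matrix (Fin d) (Fin d) ℝ → ℝ)
    (hconv : ConvexOn ℝ Set.univ f) (hcont : Continuous f)
    (γ₀ : Matrix (Fin d) (Fin d) ℝ) :
    ∃ g : Matrix (Fin d) (Fin d) ℝ →L[ℝ] ℝ, ∀ x, f γ₀ + (g x - g γ₀) ≤ f x := by
  set s : Set (Matrix (Fin d) (Fin d) ℝ × ℝ) := {p | f p.1 < p.2} with hs_def
  have hopen : IsOpen s := isOpen_lt (hcont.comp continuous_fst) continuous_snd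
  have hsconv : Convex ℝ s := by
    rintro p hp q hq a b ha hb hab
    rcases ha.eq_or_lt with rfl | ha'
    · have hb1 : b = 1 := by linarith
      subst hb1
      simpa using hq
    rcases hb.eq_or_lt with rfl | hb'
    · simpa [(by linarith : a = 1)] using hp
    have h1 : f (a • p.1 + b • q.1) ≤ a * f p.1 + b * f q.1 :=
      hconv.2 (Set.mem_univ p.1) (Set.mem_univ q.1) ha hb hab
    have : a * f p.1 + b * f q.1 < a * p.2 + b * q.2 :=
      add_lt_add (mul_lt_mul_of_pos_left hp ha') (mul_lt_mul_of_pos_left hq hb')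
    show f (a • p + b • q).1 < (a • p + b • q).2
    simp only [Prod.fst_add, Prod.snd_add, Prod.smul_fst, Prod.smul_snd, smul_eq_mul]
    exact lt_of_le_of_lt h1 this
  obtain ⟨φ, u, hsep, hpt⟩ :=
    geometric_hahn_banach_open hsconv hopen (convex_singleton (γ₀, f γ₀))
      (by simp [Set.disjoint_singleton_right, hs_def])
  set ψ : Matrix (Fin d) (Fin d) ℝ →L[ℝ] ℝ := φ.comp (ContinuousLinearMap.inl ℝ _ ℝ) with hψ
  set c : ℝ := φ (0, 1) with hc_def
  have hsplit : ∀ (x : Matrix (Fin d) (Fin d) ℝ) (t : ℝ), φ (x, t) = ψ x + t * c := by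
    intro x t
    have hxt : (x, t) = ((x, (0:ℝ)) + t • ((0 : Matrix (Fin d) (Fin d) ℝ), (1:ℝ))) := by
      simp
    rw [hxt, map_add, φ.map_smul, smul_eq_mul]
    rfl
  have h2 : u ≤ ψ γ₀ + f γ₀ * c := by
    have := hpt _ rfl
    rwa [hsplit] at this
  have h1 : ∀ (x : Matrix (Fin d) (Fin d) ℝ) (t : ℝ), f x < t → ψ x + t * c < u := by
    intro x t h
    have := hsep (x, t) h
    rwa [hsplit] at this
  have hc : c < 0 := by
    have hA := h1 γ₀ (f γ₀ + 1) (by linarith)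
    nlinarith
  have h0 : 0 < -c := by linarith
  have hle : ∀ x, ψ x + f x * c ≤ u := by
    intro x
    refine le_of_forall_pos_lt_add fun ε hε => ?_
    have hA := h1 x (f x + ε / (-c)) (by have := div_pos hε h0; linarith)
    have he : (f x + ε / (-c)) * c = f x * c - ε := by
      have hne : -c ≠ 0 := ne_of_gt h0
      have h' : ε / (-c) * c = -ε := by rw [div_neg, neg_mul, div_mul_cancel₀ _ (by linarith : c ≠ 0)]
      rw [add_mul, h']; ring
    linarith [hA]
  refine ⟨(-c)⁻¹ • ψ, fun x => ?_⟩
  have key : ψ x + f x * c ≤ ψ γ₀ + f γ₀ * c := (hle x).trans h2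
  simp only [ContinuousLinearMap.smul_apply, smul_eq_mul]
  have h3 : ((-c)⁻¹ * ψ x - (-c)⁻¹ * ψ γ₀) ≤ f x - f γ₀ := by
    rw [← mul_sub, inv_mul_le_iff₀ h0]
    nlinarith
  linarith

/-- The candidate dual matrix built from a linear functional. -/
noncomputable def aMat (g : Matrix (Fin d) (Fin d) ℝ →L[ℝ] ℝ) : Matrix (Fin d) (Fin d) ℝ :=
  Matrix.of fun i j => g (Matrix.single i j 1 + Matrix.single j i 1)

lemma aMat_isSymm (g : Matrix (Fin d) (Fin d) ℝ →L[ℝ] ℝ) : (aMat g).IsSymm := by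
  ext i j
  simp only [Matrix.transpose_apply, aMat, Matrix.of_apply]
  rw [add_comm]

lemma sum_smul_basis (x : Matrix (Fin d) (Fin d) ℝ) :
    ∑ i, ∑ j, x j i • (Matrix.single i j (1:ℝ) + Matrix.single j i 1)
      = x + xᵀ := by
  ext k l
  simp only [Matrix.sum_apply, Matrix.smul_apply, Matrix.add_apply, Matrix.transpose_apply,
    Matrix.single, Matrix.of_apply, smul_eq_mul, mul_add, mul_ite, mul_one, mul_zero]
  simp [ite_and, Finset.sum_add_distrib, Finset.sum_ite_eq, Finset.sum_ite_eq', add_comm]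

lemma trace_aMat_mul (g : Matrix (Fin d) (Fin d) ℝ →L[ℝ] ℝ) (x : Matrix (Fin d) (Fin d) ℝ) :
    ((aMat g) * x).trace = g (x + xᵀ) := by
  have : ((aMat g) * x).trace
      = ∑ i, ∑ j, x j i • g (Matrix.single i j 1 + Matrix.single j i 1) := by
    simp only [Matrix.trace, Matrix.diag, Matrix.mul_apply, aMat, Matrix.of_apply,
      smul_eq_mul]
    exact Finset.sum_congr rfl fun i _ => Finset.sum_congr rfl fun j _ => by ring
  rw [this]
  rw [← sum_smul_basis x]
  rw [map_sum]
  refine Finset.sum_congr rfl fun i _ => ?_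
  rw [map_sum]
  refine Finset.sum_congr rfl fun j _ => ?_
  rw [g.map_smul]

end Auxiliary

/-- for a convex continuous `F` with `Ḡ ≤ F ≤ Ḡ + δ` on symmetric matrices,
`F` equals the dual representation
`F(γ) = sup { ½ tr(a γ) − L(a) : a̲ ≤ a ≤ ā }` where `L(a) = sup (legendreSet F a)`. -/
theorem stmt_5 {d : ℕ} (hd : 1 ≤ d) (al au : Matrix (Fin d) (Fin d) ℝ)
    (hals : al.IsSymm) (haus : au.IsSymm)
    (hal : al.PosSemidef) (hlu : (au - al).PosSemidef)
    (δ : ℝ) (hδ : 0 ≤ δ)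
    (F : Matrix (Fin d) (Fin d) ℝ → ℝ)
    (hFc : ConvexOn ℝ {γ : Matrix (Fin d) (Fin d) ℝ | γ.IsSymm} F)
    (hFcont : ContinuousOn F {γ : Matrix (Fin d) (Fin d) ℝ | γ.IsSymm})
    (hF : ∀ γ : Matrix (Fin d) (Fin d) ℝ, γ.IsSymm →
      GbarFun al au γ ≤ F γ ∧ F γ ≤ GbarFun al au γ + δ) :
    ∀ γ : Matrix (Fin d) (Fin d) ℝ, γ.IsSymm →
      F γ = sSup {x : ℝ | ∃ a : Matrix (Fin d) (Fin d) ℝ, a.IsSymm ∧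
        (a - al).PosSemidef ∧ (au - a).PosSemidef ∧
        x = (a * γ).trace / 2 - sSup (legendreSet F a)} := by
  intro γ hγ
  -- the symmetrization map and the extension of `F` to all matrices
  set P : Matrix (Fin d) (Fin d) ℝ → Matrix (Fin d) (Fin d) ℝ :=
    fun A => (2:ℝ)⁻¹ • (A + Aᵀ) with hP_def
  have hPmem : ∀ A, (P A).IsSymm := by
    intro A
    rw [Matrix.IsSymm, hP_def, Matrix.transpose_smul, Matrix.transpose_add,
      Matrix.transpose_transpose, add_comm]
  have hPx : ∀ x : Matrix (Fin d) (Fin d) ℝ, x.IsSymm → P x = x := by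
    intro x hx
    rw [hP_def]
    show (2:ℝ)⁻¹ • (x + xᵀ) = x
    rw [hx, ← two_smul ℝ x, smul_smul]
    norm_num
  set f : Matrix (Fin d) (Fin d) ℝ → ℝ := fun A => F (P A) with hf_def
  have hfx : ∀ x : Matrix (Fin d) (Fin d) ℝ, x.IsSymm → f x = F x := by
    intro x hx
    rw [hf_def]
    show F (P x) = F x
    rw [hPx x hx]
  have hPlin : ∀ (a b : ℝ) (x y : Matrix (Fin d) (Fin d) ℝ),
      P (a • x + b • y) = a • P x + b • P y := by
    intro a b x y
    rw [hP_def]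
    show (2:ℝ)⁻¹ • ((a • x + b • y) + (a • x + b • y)ᵀ)
      = a • ((2:ℝ)⁻¹ • (x + xᵀ)) + b • ((2:ℝ)⁻¹ • (y + yᵀ))
    rw [Matrix.transpose_add, Matrix.transpose_smul, Matrix.transpose_smul]
    module
  have hfconv : ConvexOn ℝ Set.univ f := by
    refine ⟨convex_univ, fun x _ y _ a b ha hb hab => ?_⟩
    show F (P (a • x + b • y)) ≤ a • F (P x) + b • F (P y)
    rw [hPlin a b x y]
    exact hFc.2 (hPmem x) (hPmem y) ha hb hab
  have hPcont : Continuous P := by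
    rw [hP_def]
    exact (continuous_id.add (continuous_id (X := Matrix (Fin d) (Fin d) ℝ)).matrix_transpose).const_smul ((2:ℝ)⁻¹)
  have hfcont : Continuous f := hFcont.comp_continuous hPcont hPmem
  obtain ⟨g, hg⟩ := exists_subgradient f hfconv hfcont γ
  set a : Matrix (Fin d) (Fin d) ℝ := aMat g with ha_def
  have has : a.IsSymm := aMat_isSymm g
  have htr : ∀ x : Matrix (Fin d) (Fin d) ℝ, x.IsSymm → (a * x).trace = 2 * g x := by
    intro x hx
    rw [ha_def, trace_aMat_mul, hx, ← two_smul ℝ x, g.map_smul, smul_eq_mul]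
  -- the growth bound : `g b ≤ Ḡ(b)` for symmetric `b`
  have hgb : ∀ b : Matrix (Fin d) (Fin d) ℝ, b.IsSymm → g b ≤ GbarFun al au b := by
    intro b hb
    refine le_of_forall_pos_lt_add fun ε hε => ?_
    set t : ℝ := (δ + 1) / ε with ht_def
    have ht0 : 0 < t := by positivity
    have hsymm : (γ + t • b).IsSymm := by
      rw [Matrix.IsSymm, Matrix.transpose_add, Matrix.transpose_smul, hγ, hb]
    have hsg := hg (γ + t • b)
    rw [hfx _ hsymm, hfx _ hγ] at hsg
    have hglin : g (γ + t • b) = g γ + t * g b := by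
      rw [map_add, g.map_smul, smul_eq_mul]
    have h2 : F (γ + t • b) ≤ GbarFun al au (γ + t • b) + δ := (hF _ hsymm).2
    have h3 : GbarFun al au (γ + t • b) ≤ GbarFun al au γ + t * GbarFun al au b :=
      gbar_add_smul_le hals hlu γ b ht0.le
    have h4 : GbarFun al au γ ≤ F γ := (hF γ hγ).1
    have h5 : t * g b ≤ t * GbarFun al au b + δ := by
      rw [hglin] at hsg
      linarith
    have h6 : (g b - GbarFun al au b) * t ≤ δ := by nlinarith
    have h7 : g b - GbarFun al au b ≤ δ / t := (le_div_iff₀ ht0).2 h6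
    have h8 : δ / t < ε := by
      rw [ht_def, div_div_eq_mul_div, div_lt_iff₀ (by positivity)]
      nlinarith
    linarith
  -- `a` lies in the order interval `[al, au]`
  have hup : (au - a).PosSemidef := by
    refine Matrix.PosSemidef.of_dotProduct_mulVec_nonneg ?_ ?_
    · refine isHermitian_of_isSymm ?_
      rw [Matrix.IsSymm, Matrix.transpose_sub, haus, has]
    · intro v
      set p : Matrix (Fin d) (Fin d) ℝ := Matrix.vecMulVec v v with hp_def
      have hp : p.PosSemidef := vecMulVec_posSemidef v
      have hps : p.IsSymm := vecMulVec_isSymm v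
      have e1 : (a * p).trace = 2 * g p := htr p hps
      have e2 : g p ≤ GbarFun al au p := hgb p hps
      have e3 : GbarFun al au p ≤ (p * au).trace / 2 := gbar_psd_upper hals hlu hp
      have e4 := trace_mul_vecMulVec (au - a) v
      have e5 : (au * p).trace = (p * au).trace := Matrix.trace_mul_comm _ _
      have e6 : ((au - a) * p).trace = (au * p).trace - (a * p).trace := by
        rw [Matrix.sub_mul, Matrix.trace_sub]
      have : (0:ℝ) ≤ ((au - a) * p).trace := by
        rw [e6]
        linarith
      rw [← hp_def] at e4
      rw [e4] at this
      simpa using this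
  have hlo : (a - al).PosSemidef := by
    refine Matrix.PosSemidef.of_dotProduct_mulVec_nonneg ?_ ?_
    · refine isHermitian_of_isSymm ?_
      rw [Matrix.IsSymm, Matrix.transpose_sub, hals, has]
    · intro v
      set p : Matrix (Fin d) (Fin d) ℝ := Matrix.vecMulVec v v with hp_def
      have hp : p.PosSemidef := vecMulVec_posSemidef v
      have hps : p.IsSymm := vecMulVec_isSymm v
      have hnps : (-p).IsSymm := by
        rw [Matrix.IsSymm, Matrix.transpose_neg, hps]
      have e1 : (a * p).trace = 2 * g p := htr p hps
      have e2 : g (-p) ≤ GbarFun al au (-p) := hgb (-p) hnps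
      have e3 : GbarFun al au (-p) ≤ -(p * al).trace / 2 := gbar_neg_psd_upper hals hlu hp
      have e2' : -(g p) ≤ GbarFun al au (-p) := by rwa [map_neg] at e2
      have e5 : (al * p).trace = (p * al).trace := Matrix.trace_mul_comm _ _
      have e4 := trace_mul_vecMulVec (a - al) v
      have e6 : ((a - al) * p).trace = (a * p).trace - (al * p).trace := by
        rw [Matrix.sub_mul, Matrix.trace_sub]
      have : (0:ℝ) ≤ ((a - al) * p).trace := by
        rw [e6]
        linarith
      rw [← hp_def] at e4
      rw [e4] at this
      simpa using this
  -- the Legendre transform of `F` at `a` is attained at `γ`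
  have hLmem : ((a * γ).trace / 2 - F γ) ∈ legendreSet F a := ⟨γ, hγ, rfl⟩
  have hLub : ∀ x ∈ legendreSet F a, x ≤ (a * γ).trace / 2 - F γ := by
    rintro x ⟨y, hy, rfl⟩
    have h1 := hg y
    rw [hfx y hy, hfx γ hγ] at h1
    have h2 := htr y hy
    have h3 := htr γ hγ
    linarith
  have hL : sSup (legendreSet F a) = (a * γ).trace / 2 - F γ :=
    le_antisymm (csSup_le ⟨_, hLmem⟩ hLub) (le_csSup ⟨_, hLub⟩ hLmem)
  -- conclude
  have hmemT : F γ ∈ {x : ℝ | ∃ b : Matrix (Fin d) (Fin d) ℝ, b.IsSymm ∧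
      (b - al).PosSemidef ∧ (au - b).PosSemidef ∧
      x = (b * γ).trace / 2 - sSup (legendreSet F b)} :=
    ⟨a, has, hlo, hup, by rw [hL]; ring⟩
  have hubT : ∀ x ∈ {x : ℝ | ∃ b : Matrix (Fin d) (Fin d) ℝ, b.IsSymm ∧
      (b - al).PosSemidef ∧ (au - b).PosSemidef ∧
      x = (b * γ).trace / 2 - sSup (legendreSet F b)}, x ≤ F γ := by
    rintro x ⟨b, hbs, hb1, hb2, rfl⟩
    have hmem : ((b * γ).trace / 2 - F γ) ∈ legendreSet F b := ⟨γ, hγ, rfl⟩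
    have hbdd : BddAbove (legendreSet F b) := by
      refine ⟨0, ?_⟩
      rintro x ⟨y, hy, rfl⟩
      have h1 : (y * b).trace / 2 ≤ GbarFun al au y := le_gbar hbs hb1 hb2
      have h2 := (hF y hy).1
      rw [Matrix.trace_mul_comm] at h1
      show (b * y).trace / 2 - F y ≤ (0:ℝ)
      linarith
    have := le_csSup hbdd hmem
    linarith
  exact le_antisymm (le_csSup ⟨F γ, hubT⟩ hmemT) (csSup_le ⟨_, hmemT⟩ hubT)
end

section
/- Let (Ω, 𝒢) be a measurable space, m ⊆ 𝒢 a sub-σ-algebra, P₁, …, Pₙ probability measures on 𝒢, and A₁, …, Aₙ ∈ m pairwise disjoint with A₁ ∪ … ∪ Aₙ = Ω; let P̂ be the pasted measure. If ξ : Ω → ℝ is 𝒢-measurable and integrable with respect to each Pⱼ, then ξ is integrable with respect to P̂, and the conditional expectations satisfy E^{P̂}[ξ | m] = Σⱼ 1_{Aⱼ} · E^{Pⱼ}[ξ | m] P̂-almost surely. -/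
open MeasureTheory

/-- for the pasted measure `P̂` of `P₁, …, Pₙ` along an `m`-measurable
partition `A₁, …, Aₙ`, a random variable integrable under each `Pⱼ` is `P̂`-integrable and
`E^{P̂}[ξ|m] = Σⱼ 1_{Aⱼ} E^{Pⱼ}[ξ|m]` holds `P̂`-a.s. -/
theorem stmt_7 {Ω : Type*} (m : MeasurableSpace Ω) [𝒢 : MeasurableSpace Ω]
    (hm : m ≤ 𝒢)
    {n : ℕ} (P : Fin n → Measure Ω) [∀ j, IsProbabilityMeasure (P j)]
    (A : Fin n → Set Ω) (hAm : ∀ j, MeasurableSet[m] (A j))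
    (hdisj : Pairwise (Function.onFun Disjoint A))
    (hcover : (⋃ j, A j) = Set.univ)
    (Phat : Measure Ω)
    (hPhat : ∀ E : Set Ω, MeasurableSet[𝒢] E → Phat E = ∑ j, P j (E ∩ A j))
    (ξ : Ω → ℝ) (hξm : Measurable ξ) (hξint : ∀ j, Integrable ξ (P j)) :
    Integrable ξ Phat ∧
      Phat[ξ|m] =ᵐ[Phat]
        fun ω => ∑ j, Set.indicator (A j) ((P j)[ξ|m]) ω := by
  -- Phat as a finite sum of restricted measures
  have hPhat_eq : Phat = ∑ j, (P j).restrict (A j) := by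
    refine Measure.ext fun E hE => ?_
    rw [hPhat E hE, Measure.finset_sum_apply]
    exact Finset.sum_congr rfl fun j _ => (Measure.restrict_apply hE).symm
  have hξPhat : Integrable ξ Phat := by
    rw [hPhat_eq]
    exact integrable_finset_sum_measure.2 fun j _ => (hξint j).restrict
  refine ⟨hξPhat, ?_⟩
  haveI : IsFiniteMeasure Phat := by rw [hPhat_eq]; infer_instance
  set g : Ω → ℝ := fun ω => ∑ j, Set.indicator (A j) ((P j)[ξ|m]) ω with hg
  have hgA : ∀ k, ∀ ω ∈ A k, g ω = (P k)[ξ|m] ω := by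
    intro k ω hωk
    simp only [hg]
    rw [Finset.sum_eq_single k]
    · rw [Set.indicator_of_mem hωk]
    · intro j _ hj
      exact Set.indicator_of_notMem (fun hωj => Set.disjoint_left.1 (hdisj hj) hωj hωk) _
    · exact fun h => absurd (Finset.mem_univ _) h
  have hgint : ∀ k, Integrable g ((P k).restrict (A k)) := fun k =>
    (integrable_condExp.restrict).congr
      ((ae_restrict_of_forall_mem (hm _ (hAm k)) fun ω hω => (hgA k ω hω).symm))
  have hgPhat : Integrable g Phat := by
    rw [hPhat_eq]; exact integrable_finset_sum_measure.2 fun k _ => hgint k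
  have hsplit : ∀ f : Ω → ℝ, (∀ k, Integrable f ((P k).restrict (A k))) →
      ∀ s, MeasurableSet[𝒢] s → ∫ x in s, f x ∂Phat = ∑ k, ∫ x in s ∩ A k, f x ∂(P k) := by
    intro f hf s hs
    have hres : Phat.restrict s = ∑ k, ((P k).restrict (A k)).restrict s := by
      refine Measure.ext fun E hE => ?_
      rw [Measure.restrict_apply hE, Measure.finset_sum_apply, hPhat_eq,
        Measure.finset_sum_apply]
      exact Finset.sum_congr rfl fun k _ => (Measure.restrict_apply hE).symm
    rw [hres, integral_finset_sum_measure]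
    · refine Finset.sum_congr rfl fun k _ => ?_
      rw [Measure.restrict_restrict hs]
    · exact fun k _ => (hf k).restrict
  refine (ae_eq_condExp_of_forall_setIntegral_eq hm hξPhat (fun s _ _ => hgPhat.integrableOn) ?_ ?_).symm
  · intro s hs _
    rw [hsplit g hgint s (hm _ hs), hsplit ξ (fun k => (hξint k).restrict) s (hm _ hs)]
    refine Finset.sum_congr rfl fun k _ => ?_
    rw [setIntegral_congr_fun ((hm _ hs).inter (hm _ (hAm k))) (fun ω hω => hgA k ω hω.2)]
    exact setIntegral_condExp hm (hξint k) (hs.inter (hAm k))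
  · exact (Finset.stronglyMeasurable_fun_sum _
      fun k _ => (stronglyMeasurable_condExp.indicator (hAm k))).aestronglyMeasurable
end

section
/- Let (Ω, 𝒢) be a measurable space with a filtration (F_t)_{t∈[0,1]}, τ : Ω → [0,1] a stopping time, and F_τ := { A ∈ 𝒢 : A ∩ {τ ≤ t} ∈ F_t for all t ∈ [0,1] }. Let P, P₁, …, Pₙ be probability measures on 𝒢 with Pⱼ(A) = P(A) for every A ∈ F_τ and every j, let A₁, …, Aₙ ∈ F_τ be pairwise disjoint with A₁ ∪ … ∪ Aₙ = Ω, and let P̂ be the pasted measure. Let X : [0,1] × Ω → ℝ be adapted to (F_t) with right-continuous paths such that X_t is integrable under P and under each Pⱼ for every t. If X is a martingale with respect to (F_t) under P and under each Pⱼ, then X is a martingale with respect to (F_t) under P̂. -/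
open MeasureTheory

set_option maxHeartbeats 1000000
set_option linter.unusedSectionVars false
section StmtAux
open Set Filter Topology

noncomputable def eK (k m : ℕ) : unitInterval :=
  ⟨min ((m : ℝ) / 2 ^ k) 1, le_min (by positivity) zero_le_one, min_le_right _ _⟩

noncomputable def gridCeil (k : ℕ) (x : unitInterval) : unitInterval :=
  eK k ⌈(x : ℝ) * 2 ^ k⌉₊

noncomputable def gridFloor (k : ℕ) (x : unitInterval) : unitInterval :=
  ⟨(⌊(x : ℝ) * 2 ^ k⌋₊ : ℝ) / 2 ^ k, by positivity,
    by rw [div_le_one (by positivity)]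
       exact (Nat.floor_le (mul_nonneg x.2.1 (by positivity))).trans (by nlinarith [x.2.2, (pow_pos (by norm_num : (0:ℝ) < 2) k)])⟩

lemma gridCeil_coe (k : ℕ) (x : unitInterval) :
    (gridCeil k x : ℝ) = (⌈(x : ℝ) * 2 ^ k⌉₊ : ℝ) / 2 ^ k := by
  have h2 : (0:ℝ) < 2 ^ k := by positivity
  have : (⌈(x : ℝ) * 2 ^ k⌉₊ : ℝ) / 2 ^ k ≤ 1 := by
    rw [div_le_one h2]  
    have : ⌈(x : ℝ) * 2 ^ k⌉₊ ≤ 2 ^ k := by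
      rw [Nat.ceil_le]; push_cast; nlinarith [x.2.2, h2]
    calc ((⌈(x : ℝ) * 2 ^ k⌉₊ : ℝ)) ≤ ((2:ℕ) ^ k : ℝ) := by exact_mod_cast this
      _ = 2 ^ k := by push_cast; ring
  simp [gridCeil, eK, min_eq_left this]

lemma le_gridCeil (k : ℕ) (x : unitInterval) : x ≤ gridCeil k x := by
  have h2 : (0:ℝ) < 2 ^ k := by positivity
  rw [← Subtype.coe_le_coe, gridCeil_coe, le_div_iff₀ h2]
  exact Nat.le_ceil _

lemma gridCeil_le_iff (k : ℕ) (x r : unitInterval) :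
    gridCeil k x ≤ r ↔ x ≤ gridFloor k r := by
  have h2 : (0:ℝ) < 2 ^ k := by positivity
  rw [← Subtype.coe_le_coe, ← Subtype.coe_le_coe, gridCeil_coe]
  show _ / _ ≤ _ ↔ (x:ℝ) ≤ _ / _
  rw [div_le_iff₀ h2, le_div_iff₀ h2]
  constructor
  · intro h
    have : ⌈(x : ℝ) * 2 ^ k⌉₊ ≤ ⌊(r : ℝ) * 2 ^ k⌋₊ := Nat.le_floor h
    exact (Nat.ceil_le.mp this)
  · intro h
    have : ⌈(x : ℝ) * 2 ^ k⌉₊ ≤ ⌊(r : ℝ) * 2 ^ k⌋₊ := Nat.ceil_le.mpr h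
    exact le_trans (by exact_mod_cast this) (Nat.floor_le (mul_nonneg r.2.1 (by positivity)))

lemma gridFloor_le (k : ℕ) (r : unitInterval) : gridFloor k r ≤ r := by
  have h2 : (0:ℝ) < 2 ^ k := by positivity
  rw [← Subtype.coe_le_coe]
  show _ / _ ≤ (r:ℝ)
  rw [div_le_iff₀ h2]
  exact Nat.floor_le (mul_nonneg r.2.1 (by positivity))

lemma tendsto_gridCeil (x : unitInterval) :
    Tendsto (fun k => gridCeil k x) atTop (𝓝 x) := by
  rw [IsEmbedding.subtypeVal.tendsto_nhds_iff]
  apply tendsto_of_tendsto_of_tendsto_of_le_of_le (g := fun _ => (x:ℝ))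
    (h := fun k => (x:ℝ) + 1 / 2 ^ k)
  · exact tendsto_const_nhds
  · have h0 : Tendsto (fun k : ℕ => ((1:ℝ)/2) ^ k) atTop (𝓝 0) :=
      tendsto_pow_atTop_nhds_zero_of_lt_one (by norm_num) (by norm_num)
    have h1 : Tendsto (fun k : ℕ => 1 / (2:ℝ) ^ k) atTop (𝓝 0) := by
      refine h0.congr (fun k => by rw [div_pow, one_pow])
    simpa using tendsto_const_nhds.add h1
  · intro k; exact_mod_cast le_gridCeil k x
  · intro k
    have h2 : (0:ℝ) < 2 ^ k := by positivity
    show (gridCeil k x : ℝ) ≤ _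
    rw [gridCeil_coe, div_le_iff₀ h2]
    have := Nat.ceil_lt_add_one (mul_nonneg x.2.1 (by positivity) : (0:ℝ) ≤ (x:ℝ) * 2 ^ k)
    calc (⌈(x : ℝ) * 2 ^ k⌉₊ : ℝ) ≤ (x:ℝ) * 2 ^ k + 1 := this.le
      _ = ((x:ℝ) + 1 / 2 ^ k) * 2 ^ k := by field_simp
lemma measurable_gridCeil (k : ℕ) : Measurable (gridCeil k) := by
  apply Measurable.comp (f := fun x : unitInterval => ⌈(x : ℝ) * 2 ^ k⌉₊) (g := eK k)
  · exact measurable_from_top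
  · exact Nat.measurable_ceil.comp ((measurable_subtype_coe).mul measurable_const)

section st
variable {Ω : Type*} [𝒢 : MeasurableSpace Ω] {F : Filtration unitInterval 𝒢}

lemma isStoppingTime_gridCeil {σ : Ω → unitInterval} (hσ : IsStoppingTime F (fun ω => (σ ω : WithTop unitInterval))) (k : ℕ) :
    IsStoppingTime F (fun ω => ((gridCeil k (σ ω) : unitInterval) : WithTop unitInterval)) := by
  intro r
  have : {ω | ((gridCeil k (σ ω) : unitInterval) : WithTop unitInterval) ≤ r} = {ω | (σ ω : WithTop unitInterval) ≤ (gridFloor k r : unitInterval)} := by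
    ext ω; simp only [Set.mem_setOf_eq, WithTop.coe_le_coe]; exact gridCeil_le_iff k (σ ω) r
  change MeasurableSet[F r] {ω | ((gridCeil k (σ ω) : unitInterval) : WithTop unitInterval) ≤ r}
  rw [this]
  exact F.mono (gridFloor_le k r) _ (hσ.measurableSet_le (gridFloor k r))

lemma countable_range_gridCeil {σ : Ω → unitInterval} (k : ℕ) (t : unitInterval) :
    (Set.range (fun ω => ((min (gridCeil k (σ ω)) t : unitInterval) : WithTop unitInterval))).Countable := by
  apply Set.Countable.mono _ (Set.countable_range (fun m : ℕ => ((min (eK k m) t : unitInterval) : WithTop unitInterval)))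
  rintro x ⟨ω, rfl⟩
  exact ⟨⌈(σ ω : ℝ) * 2 ^ k⌉₊, rfl⟩

lemma isST_min_const {τ : Ω → unitInterval}
    (hτ : IsStoppingTime F (fun ω => (τ ω : WithTop unitInterval))) (r : unitInterval) :
    IsStoppingTime F (fun ω => ((min (τ ω) r : unitInterval) : WithTop unitInterval)) := by
  intro i
  have h := (hτ.min_const r) i
  have e : {ω | ((min (τ ω) r : unitInterval) : WithTop unitInterval) ≤ i}
      = {ω | min (τ ω : WithTop unitInterval) r ≤ i} := by
    ext ω; simp
  change MeasurableSet[F i] {ω | ((min (τ ω) r : unitInterval) : WithTop unitInterval) ≤ i}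
  rw [e]; exact h

lemma ms_congr {f g : Ω → WithTop unitInterval} (hf : IsStoppingTime F f)
    (hg : IsStoppingTime F g) (h : f = g) : hf.measurableSpace = hg.measurableSpace := by
  subst h; rfl

lemma aux_unc {Ω : Type*} (m : MeasurableSpace Ω) (g : ℕ → Ω → ℝ)
    (hg : ∀ n, @Measurable Ω ℝ m _ (g n)) :
    @Measurable (Ω × ℕ) ℝ (@Prod.instMeasurableSpace Ω ℕ m ⊤) _ (fun q => g q.2 q.1) := by
  letI := m
  exact measurable_from_prod_countable_left (fun n => hg n)

/-- An adapted right-continuous process is progressively measurable. -/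
lemma progMeasurable_of_rightContinuous {X : unitInterval → Ω → ℝ}
    (hadp : Adapted F X)
    (hrc : ∀ ω, ∀ t : unitInterval, ContinuousWithinAt (fun s => X s ω) (Set.Ici t) t) :
    IsStronglyProgressive F X := by
  intro i
  apply stronglyMeasurable_of_tendsto (u := atTop)
    (f := fun k (p : Set.Iic i × Ω) => X (min (gridCeil k ↑p.1) i) p.2)
  · intro k
    simp only [gridCeil]
    apply Measurable.stronglyMeasurable
    have h1 : @Measurable (Set.Iic i × Ω) (Ω × ℕ)
        (Subtype.instMeasurableSpace.prod (F i)) (@Prod.instMeasurableSpace Ω ℕ (F i) ⊤)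
        (fun p => (p.2, ⌈((p.1 : unitInterval) : ℝ) * 2 ^ k⌉₊)) := by
      refine Measurable.prodMk ?_ ?_
      · exact @measurable_snd _ _ Subtype.instMeasurableSpace (F i)
      · have hc : @Measurable (Set.Iic i × Ω) ℝ (Subtype.instMeasurableSpace.prod (F i)) _
            (fun p => ((p.1 : unitInterval) : ℝ)) :=
          measurable_subtype_coe.comp (measurable_subtype_coe.comp
            (@measurable_fst _ _ Subtype.instMeasurableSpace (F i)))
        exact Nat.measurable_ceil.comp (hc.mul measurable_const)
    have h2 : @Measurable (Ω × ℕ) ℝ (@Prod.instMeasurableSpace Ω ℕ (F i) ⊤) _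
        (fun q => X (min (eK k q.2) i) q.1) :=
      aux_unc (F i) (fun n ω => X (min (eK k n) i) ω)
        (fun n => ((hadp (min (eK k n) i)).mono (F.mono (min_le_right _ _)) le_rfl))
    have h3 := h2.comp h1
    exact h3
  · rw [tendsto_pi_nhds]
    rintro ⟨⟨t, ht⟩, ω⟩
    have hmem : ∀ k, min (gridCeil k t) i ∈ Set.Ici t := fun k =>
      le_min (le_gridCeil k t) ht
    have htend : Tendsto (fun k => min (gridCeil k t) i) atTop (𝓝 t) := by
      apply tendsto_of_tendsto_of_tendsto_of_le_of_le (g := fun _ => t)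
        (h := fun k => gridCeil k t) tendsto_const_nhds (tendsto_gridCeil t)
      · exact hmem
      · exact fun k => min_le_left _ _
    have := (hrc ω t).tendsto.comp
      (tendsto_nhdsWithin_iff.mpr ⟨htend, Filter.Eventually.of_forall hmem⟩)
    exact this
variable {μ : Measure Ω} [IsProbabilityMeasure μ] {X : unitInterval → Ω → ℝ}

/-- Optional sampling for a right-continuous martingale and a bounded stopping time,
in set-integral form. -/
lemma optSample (hmart : Martingale X F μ)
    (hrc : ∀ ω, ∀ t : unitInterval, ContinuousWithinAt (fun s => X s ω) (Set.Ici t) t)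
    {σ : Ω → unitInterval} (hσ : IsStoppingTime F (fun ω => (σ ω : WithTop unitInterval))) {t : unitInterval} (hle : ∀ ω, σ ω ≤ t) :
    Integrable (stoppedValue X (fun ω => (σ ω : WithTop unitInterval))) μ ∧
      ∀ C, MeasurableSet[hσ.measurableSpace] C →
        ∫ ω in C, X t ω ∂μ = ∫ ω in C, stoppedValue X (fun ω => (σ ω : WithTop unitInterval)) ω ∂μ := by
  set σk : ℕ → Ω → unitInterval := fun k ω => min (gridCeil k (σ ω)) t with hσkdef
  have hσk : ∀ k, IsStoppingTime F (fun ω => (σk k ω : WithTop unitInterval)) := fun k => isST_min_const (isStoppingTime_gridCeil hσ k) t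
  have hσ_le_σk : ∀ k ω, σ ω ≤ σk k ω := fun k ω => le_min (le_gridCeil k (σ ω)) (hle ω)
  have hσk_le : ∀ k ω, σk k ω ≤ t := fun k ω => min_le_right _ _
  set Z : ℕ → Ω → ℝ := fun k => μ[X t | (hσk k).measurableSpace] with hZdef
  have hOS : ∀ k, stoppedValue X (fun ω => (σk k ω : WithTop unitInterval)) =ᵐ[μ] Z k := fun k =>
    hmart.stoppedValue_ae_eq_condExp_of_le_const_of_countable_range (hσk k) (fun ω => WithTop.coe_le_coe.mpr (hσk_le k ω))
      (countable_range_gridCeil k t)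
  have hptw : ∀ ω, Tendsto (fun k => stoppedValue X (fun ω => (σk k ω : WithTop unitInterval)) ω) atTop (𝓝 (stoppedValue X (fun ω => (σ ω : WithTop unitInterval)) ω)) := by
    intro ω
    have hmem : ∀ k, σk k ω ∈ Set.Ici (σ ω) := fun k => hσ_le_σk k ω
    have htend : Tendsto (fun k => σk k ω) atTop (𝓝 (σ ω)) := by
      apply tendsto_of_tendsto_of_tendsto_of_le_of_le (g := fun _ => σ ω)
        (h := fun k => gridCeil k (σ ω)) tendsto_const_nhds (tendsto_gridCeil (σ ω))
      · exact hmem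
      · exact fun k => min_le_left _ _
    exact (hrc ω (σ ω)).tendsto.comp
      (tendsto_nhdsWithin_iff.mpr ⟨htend, Filter.Eventually.of_forall hmem⟩)
  have hZmeas : ∀ k, AEStronglyMeasurable (Z k) μ := fun k =>
    (stronglyMeasurable_condExp.mono ((hσk k).measurableSpace_le)).aestronglyMeasurable
  have htendZ : ∀ᵐ ω ∂μ, Tendsto (fun k => Z k ω) atTop (𝓝 (stoppedValue X (fun ω => (σ ω : WithTop unitInterval)) ω)) := by
    have := ae_all_iff.mpr hOS
    filter_upwards [this] with ω hω
    exact (hptw ω).congr (fun k => hω k)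
  have hUI : UniformIntegrable Z 1 μ :=
    (hmart.integrable t).uniformIntegrable_condExp (fun k => (hσk k).measurableSpace_le)
  have hlimmeas : AEStronglyMeasurable (stoppedValue X (fun ω => (σ ω : WithTop unitInterval))) μ :=
    aestronglyMeasurable_of_tendsto_ae atTop hZmeas htendZ
  obtain ⟨Cb, hCb⟩ := hUI.2.2
  have hmemlim : MemLp (stoppedValue X (fun ω => (σ ω : WithTop unitInterval))) 1 μ := by
    refine ⟨hlimmeas, ?_⟩
    have hfatou := Lp.eLpNorm_lim_le_liminf_eLpNorm hZmeas (stoppedValue X (fun ω => (σ ω : WithTop unitInterval))) htendZ (p := 1)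
    refine lt_of_le_of_lt hfatou (lt_of_le_of_lt ?_ (ENNReal.coe_lt_top (r := Cb)))
    exact Filter.liminf_le_of_frequently_le' (Filter.Frequently.of_forall (fun k => hCb k))
  have hintlim : Integrable (stoppedValue X (fun ω => (σ ω : WithTop unitInterval))) μ := memLp_one_iff_integrable.mp hmemlim
  refine ⟨hintlim, fun C hC => ?_⟩
  have hTIM : TendstoInMeasure μ Z atTop (stoppedValue X (fun ω => (σ ω : WithTop unitInterval))) :=
    tendstoInMeasure_of_tendsto_ae hZmeas htendZ
  have hL1 : Tendsto (fun k => eLpNorm (Z k - stoppedValue X (fun ω => (σ ω : WithTop unitInterval))) 1 μ) atTop (𝓝 0) :=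
    tendsto_Lp_finite_of_tendstoInMeasure le_rfl ENNReal.one_ne_top hZmeas hmemlim hUI.2.1 hTIM
  have hconst : ∀ k, ∫ ω in C, Z k ω ∂μ = ∫ ω in C, X t ω ∂μ := by
    intro k
    have hCk : MeasurableSet[(hσk k).measurableSpace] C :=
      (hσ.measurableSpace_mono (hσk k) (fun ω => WithTop.coe_le_coe.mpr (hσ_le_σk k ω))) _ hC
    exact setIntegral_condExp ((hσk k).measurableSpace_le) (hmart.integrable t) hCk
  have htendInt : Tendsto (fun k => ∫ ω in C, Z k ω ∂μ) atTop
      (𝓝 (∫ ω in C, stoppedValue X (fun ω => (σ ω : WithTop unitInterval)) ω ∂μ)) := by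
    apply tendsto_setIntegral_of_L1 (stoppedValue X (fun ω => (σ ω : WithTop unitInterval))) hintlim.aestronglyMeasurable
      (Filter.Eventually.of_forall (fun k => integrable_condExp))
    · simp_rw [eLpNorm_one_eq_lintegral_enorm, Pi.sub_apply] at hL1
      exact hL1
  rw [Filter.tendsto_congr hconst] at htendInt
  exact (tendsto_nhds_unique tendsto_const_nhds htendInt)

lemma measurableSet_le_tau {τ : Ω → unitInterval} (hτ : IsStoppingTime F (fun ω => (τ ω : WithTop unitInterval))) (r : unitInterval) :
    MeasurableSet[hτ.measurableSpace] {ω | (τ ω : WithTop unitInterval) ≤ r} := by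
  exact hτ.measurableSet_le' r

/-- Optional sampling in set-integral form over `F_τ`-measurable sets. -/
lemma optSample' (hmart : Martingale X F μ)
    (hrc : ∀ ω, ∀ t : unitInterval, ContinuousWithinAt (fun s => X s ω) (Set.Ici t) t)
    {τ : Ω → unitInterval} (hτ : IsStoppingTime F (fun ω => (τ ω : WithTop unitInterval))) (r : unitInterval) :
    Integrable (stoppedValue X (fun ω => ((min (τ ω) r : unitInterval) : WithTop unitInterval))) μ ∧
      ∀ C, MeasurableSet[hτ.measurableSpace] C →
        ∫ ω in C, X r ω ∂μ = ∫ ω in C, stoppedValue X (fun ω => ((min (τ ω) r : unitInterval) : WithTop unitInterval)) ω ∂μ := by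
  have hσ : IsStoppingTime F (fun ω => ((min (τ ω) r : unitInterval) : WithTop unitInterval)) := isST_min_const hτ r
  obtain ⟨hint, hset⟩ := optSample hmart hrc hσ (fun ω => min_le_right _ _)
  refine ⟨hint, fun C hC => ?_⟩
  have hCG : MeasurableSet C := hτ.measurableSpace_le _ hC
  set D : Set Ω := C ∩ {ω | (τ ω : WithTop unitInterval) ≤ r} with hDdef
  set E : Set Ω := C ∩ {ω | (τ ω : WithTop unitInterval) ≤ r}ᶜ with hEdef
  have hDτ : MeasurableSet[hτ.measurableSpace] D := hC.inter (measurableSet_le_tau hτ r)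
  have hDσ : MeasurableSet[hσ.measurableSpace] D :=
    by rw [ms_congr hσ (hτ.min_const r) (funext fun ω => by simp)]
       exact (hτ.measurableSet_inter_le_const_iff C r).mp hDτ
  have hDG : MeasurableSet D := hτ.measurableSpace_le _ hDτ
  have hEG : MeasurableSet E := hCG.inter (hτ.measurableSpace_le _ (measurableSet_le_tau hτ r)).compl
  have hdisj : Disjoint D E := by
    apply Set.disjoint_left.mpr
    rintro ω ⟨_, h1⟩ ⟨_, h2⟩
    exact h2 h1
  have hunion : D ∪ E = C := Set.inter_union_compl C _
  have hEeq : ∀ ω ∈ E, X r ω = stoppedValue X (fun ω => ((min (τ ω) r : unitInterval) : WithTop unitInterval)) ω := by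
    rintro ω ⟨_, hω⟩
    have : min (τ ω) r = r := min_eq_right (le_of_lt (lt_of_not_ge (fun h => hω (WithTop.coe_le_coe.mpr h))))
    simp [stoppedValue, this]
  calc ∫ ω in C, X r ω ∂μ = ∫ ω in D, X r ω ∂μ + ∫ ω in E, X r ω ∂μ := by
        rw [← hunion]
        exact setIntegral_union hdisj hEG ((hmart.integrable r).integrableOn)
          ((hmart.integrable r).integrableOn)
    _ = ∫ ω in D, stoppedValue X (fun ω => ((min (τ ω) r : unitInterval) : WithTop unitInterval)) ω ∂μ
          + ∫ ω in E, stoppedValue X (fun ω => ((min (τ ω) r : unitInterval) : WithTop unitInterval)) ω ∂μ := by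
        rw [hset D hDσ, setIntegral_congr_fun hEG hEeq]
    _ = ∫ ω in C, stoppedValue X (fun ω => ((min (τ ω) r : unitInterval) : WithTop unitInterval)) ω ∂μ := by
        rw [← hunion]
        exact (setIntegral_union hdisj hEG hint.integrableOn hint.integrableOn).symm

lemma integral_eq_of_agree {m : MeasurableSpace Ω} (hm : m ≤ 𝒢) {ν₁ ν₂ : @Measure Ω 𝒢}
    (hagree : ∀ B : Set Ω, MeasurableSet[m] B → ν₁ B = ν₂ B) {f : Ω → ℝ}
    (hf : StronglyMeasurable[m] f) : ∫ ω, f ω ∂ν₁ = ∫ ω, f ω ∂ν₂ := by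
  have htrim : ν₁.trim hm = ν₂.trim hm := by
    refine @Measure.ext Ω m _ _ (fun s hs => ?_)
    rw [trim_measurableSet_eq hm hs, trim_measurableSet_eq hm hs, hagree s hs]
  rw [integral_trim hm hf, integral_trim hm hf, htrim]

end st

end StmtAux

/-- pasting finitely many probability measures along an `F_τ`-measurable
partition, where `τ` is a stopping time and all measures agree with `P₀` on `F_τ`,
preserves the martingale property of an adapted right-continuous process that is a
martingale under `P₀` and under each `Pⱼ`. -/
theorem stmt_8 {Ω : Type*} [𝒢 : MeasurableSpace Ω]
    (F : Filtration unitInterval 𝒢)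
    (τ : Ω → unitInterval) (hτ : IsStoppingTime F (fun ω => (τ ω : WithTop unitInterval)))
    {n : ℕ} (P₀ : Measure Ω) [IsProbabilityMeasure P₀]
    (P : Fin n → Measure Ω) [∀ j, IsProbabilityMeasure (P j)]
    (hagree : ∀ j, ∀ B : Set Ω, MeasurableSet[hτ.measurableSpace] B → P j B = P₀ B)
    (A : Fin n → Set Ω) (hAm : ∀ j, MeasurableSet[hτ.measurableSpace] (A j))
    (hdisj : Pairwise (Function.onFun Disjoint A))
    (hcover : (⋃ j, A j) = Set.univ)
    (Phat : Measure Ω)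
    (hPhat : ∀ E : Set Ω, MeasurableSet[𝒢] E → Phat E = ∑ j, P j (E ∩ A j))
    (X : unitInterval → Ω → ℝ)
    (hadp : Adapted F X)
    (hrc : ∀ ω, ∀ t : unitInterval, ContinuousWithinAt (fun s => X s ω) (Set.Ici t) t)
    (hint0 : ∀ t, Integrable (X t) P₀) (hintj : ∀ j t, Integrable (X t) (P j))
    (hmart0 : Martingale X F P₀) (hmartj : ∀ j, Martingale X F (P j)) :
    Martingale X F Phat := by
  classical
  have hleτ : hτ.measurableSpace ≤ 𝒢 := hτ.measurableSpace_le
  have hprog : IsStronglyProgressive F X := progMeasurable_of_rightContinuous hadp hrc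
  have hAG : ∀ j, MeasurableSet (A j) := fun j => hleτ _ (hAm j)
  have hPhat_eq : Phat = ∑ j, (P j).restrict (A j) := by
    refine Measure.ext (fun E hE => ?_)
    rw [hPhat E hE, Measure.finset_sum_apply]
    exact Finset.sum_congr rfl (fun j _ => (Measure.restrict_apply hE).symm)
  have hintPhat : ∀ u, Integrable (X u) Phat := by
    intro u; rw [hPhat_eq]
    exact integrable_finset_sum_measure.mpr (fun j _ => (hintj j u).restrict)
  haveI : IsFiniteMeasure Phat := by
    constructor
    rw [hPhat_eq, Measure.finset_sum_apply]
    exact ENNReal.sum_lt_top.mpr (fun j _ => measure_lt_top _ _)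
  -- splitting of set integrals over Phat
  have hsplit : ∀ (f : Ω → ℝ), (∀ j, Integrable f (P j)) → ∀ B : Set Ω, MeasurableSet B →
      ∫ ω in B, f ω ∂Phat = ∑ j, ∫ ω in B ∩ A j, f ω ∂(P j) := by
    intro f hf B hB
    have hres : Phat.restrict B = ∑ j, (P j).restrict (B ∩ A j) := by
      refine Measure.ext (fun E hE => ?_)
      rw [Measure.restrict_apply hE, hPhat _ (hE.inter hB), Measure.finset_sum_apply]
      refine Finset.sum_congr rfl (fun j _ => ?_)
      rw [Measure.restrict_apply hE, Set.inter_assoc]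
    rw [show (∫ ω in B, f ω ∂Phat) = ∫ ω, f ω ∂(Phat.restrict B) from rfl, hres,
      integral_finset_sum_measure (fun j _ => (hf j).restrict)]
  -- the key set-integral equality
  have key : ∀ s t : unitInterval, s ≤ t → ∀ B : Set Ω, MeasurableSet[F s] B →
      ∫ ω in B, X s ω ∂Phat = ∫ ω in B, X t ω ∂Phat := by
    intro s t hst B hB
    have hBG : MeasurableSet B := F.le s _ hB
    set Sc : Set Ω := {ω | (τ ω : WithTop unitInterval) ≤ s}ᶜ with hScdef
    have hBSc : MeasurableSet[hτ.measurableSpace] (B ∩ Sc) := by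
      rw [hτ.measurableSet]
      refine ⟨le_iSup F s _ (hB.inter ((hτ s).compl)), fun i => ?_⟩
      by_cases hi : i ≤ s
      · have hempty : (B ∩ Sc) ∩ {ω | (τ ω : WithTop unitInterval) ≤ i} = ∅ := by
          ext ω
          simp only [Set.mem_inter_iff, Set.mem_compl_iff, Set.mem_setOf_eq,
            Set.mem_empty_iff_false, iff_false, not_and, hScdef, and_imp]
          intro _ hω hωi
          exact absurd (le_trans hωi (by exact_mod_cast hi)) hω
        rw [hempty]; exact @MeasurableSet.empty _ (F i)
      · push_neg at hi
        have hsi : s ≤ i := le_of_lt hi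
        exact ((F.mono hsi _ hB).inter ((F.mono hsi _ (hτ s)).compl)).inter
          (hτ.measurableSet_le i)
    have hBScFs : MeasurableSet[F s] (B ∩ Sc) := hB.inter ((hτ s).compl)
    have hBScG : MeasurableSet (B ∩ Sc) := hleτ _ hBSc
    set D : Fin n → Set Ω := fun j => B ∩ (A j ∩ {ω | (τ ω : WithTop unitInterval) ≤ s}) with hDdef
    set C : Fin n → Set Ω := fun j => (B ∩ Sc) ∩ A j with hCdef
    have hDFs : ∀ j, MeasurableSet[F s] (D j) := fun j =>
      hB.inter (((hτ.measurableSet (A j)).mp (hAm j)).2 s)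
    have hDG : ∀ j, MeasurableSet (D j) := fun j => F.le s _ (hDFs j)
    have hCτ : ∀ j, MeasurableSet[hτ.measurableSpace] (C j) := fun j => hBSc.inter (hAm j)
    have hCG : ∀ j, MeasurableSet (C j) := fun j => hleτ _ (hCτ j)
    have hdisjDC : ∀ j, Disjoint (D j) (C j) := by
      intro j
      apply Set.disjoint_left.mpr
      rintro ω ⟨_, _, h1⟩ ⟨⟨_, h2⟩, _⟩
      exact h2 h1
    have hDCunion : ∀ j, D j ∪ C j = B ∩ A j := by
      intro j
      ext ω
      by_cases h : τ ω ≤ s <;>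
        simp [hDdef, hCdef, hScdef, h, Set.mem_inter_iff, and_comm, and_assoc] <;> tauto
    set Yt : Ω → ℝ := stoppedValue X (fun ω => ((min (τ ω) t : unitInterval) : WithTop unitInterval)) with hYtdef
    set Ys : Ω → ℝ := stoppedValue X (fun ω => ((min (τ ω) s : unitInterval) : WithTop unitInterval)) with hYsdef
    have hYt_m : StronglyMeasurable[hτ.measurableSpace] Yt :=
      ((measurable_stoppedValue hprog (isST_min_const hτ t)).mono
        (IsStoppingTime.measurableSpace_mono (isST_min_const hτ t) hτ
          (fun ω => WithTop.coe_le_coe.mpr (min_le_left _ _))) le_rfl).stronglyMeasurable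
    have hYs_m : StronglyMeasurable[hτ.measurableSpace] Ys :=
      ((measurable_stoppedValue hprog (isST_min_const hτ s)).mono
        (IsStoppingTime.measurableSpace_mono (isST_min_const hτ s) hτ
          (fun ω => WithTop.coe_le_coe.mpr (min_le_left _ _))) le_rfl).stronglyMeasurable
    -- transfer of the C-part integrals from P j to P₀
    have htransfer : ∀ (Y : Ω → ℝ), StronglyMeasurable[hτ.measurableSpace] Y → ∀ j,
        ∫ ω in C j, Y ω ∂(P j) = ∫ ω in C j, Y ω ∂P₀ := by
      intro Y hY j
      have := integral_eq_of_agree hleτ (hagree j) (hY.indicator (hCτ j))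
      rwa [integral_indicator (hCG j), integral_indicator (hCG j)] at this
    have hCunion : ⋃ j, C j = B ∩ Sc := by
      rw [hCdef, ← Set.inter_iUnion, hcover, Set.inter_univ]
    have hCpairwise : (↑(Finset.univ : Finset (Fin n)) : Set (Fin n)).Pairwise
        (Function.onFun Disjoint C) := by
      intro j _ j' _ hjj'
      exact Disjoint.mono Set.inter_subset_right Set.inter_subset_right (hdisj hjj')
    -- sum over C parts under P₀ for a given integrand
    have hsumC : ∀ (Y : Ω → ℝ), Integrable Y P₀ →
        ∑ j, ∫ ω in C j, Y ω ∂P₀ = ∫ ω in B ∩ Sc, Y ω ∂P₀ := by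
      intro Y hY
      rw [← hCunion, ← Set.biUnion_univ (s := C)]
      rw [show (⋃ j ∈ (Set.univ : Set (Fin n)), C j) = ⋃ j ∈ (Finset.univ : Finset (Fin n)), C j
        by simp]
      exact (integral_biUnion_finset Finset.univ (fun j _ => hCG j) hCpairwise
        (fun j _ => hY.integrableOn)).symm
    -- main chain for the C parts
    have hCchain : ∑ j, ∫ ω in C j, X s ω ∂(P j) = ∑ j, ∫ ω in C j, X t ω ∂(P j) := by
      have e_s : ∀ j, ∫ ω in C j, X s ω ∂(P j) = ∫ ω in C j, Ys ω ∂P₀ := fun j => by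
        rw [(optSample' (hmartj j) hrc hτ s).2 (C j) (hCτ j), htransfer Ys hYs_m j]
      have e_t : ∀ j, ∫ ω in C j, X t ω ∂(P j) = ∫ ω in C j, Yt ω ∂P₀ := fun j => by
        rw [(optSample' (hmartj j) hrc hτ t).2 (C j) (hCτ j), htransfer Yt hYt_m j]
      calc ∑ j, ∫ ω in C j, X s ω ∂(P j) = ∑ j, ∫ ω in C j, Ys ω ∂P₀ :=
            Finset.sum_congr rfl (fun j _ => e_s j)
        _ = ∫ ω in B ∩ Sc, Ys ω ∂P₀ := hsumC Ys (optSample' hmart0 hrc hτ s).1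
        _ = ∫ ω in B ∩ Sc, X s ω ∂P₀ := ((optSample' hmart0 hrc hτ s).2 _ hBSc).symm
        _ = ∫ ω in B ∩ Sc, X t ω ∂P₀ := hmart0.setIntegral_eq hst hBScFs
        _ = ∫ ω in B ∩ Sc, Yt ω ∂P₀ := (optSample' hmart0 hrc hτ t).2 _ hBSc
        _ = ∑ j, ∫ ω in C j, Yt ω ∂P₀ := (hsumC Yt (optSample' hmart0 hrc hτ t).1).symm
        _ = ∑ j, ∫ ω in C j, X t ω ∂(P j) :=
            Finset.sum_congr rfl (fun j _ => (e_t j).symm)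
    -- put everything together
    have hsplit_int : ∀ (u : unitInterval) j, ∫ ω in B ∩ A j, X u ω ∂(P j)
        = ∫ ω in D j, X u ω ∂(P j) + ∫ ω in C j, X u ω ∂(P j) := by
      intro u j
      rw [← hDCunion j]
      exact setIntegral_union (hdisjDC j) (hCG j) (hintj j u).integrableOn
        (hintj j u).integrableOn
    rw [hsplit (X s) (fun j => hintj j s) B hBG, hsplit (X t) (fun j => hintj j t) B hBG]
    calc ∑ j, ∫ ω in B ∩ A j, X s ω ∂(P j)
        = ∑ j, (∫ ω in D j, X s ω ∂(P j) + ∫ ω in C j, X s ω ∂(P j)) :=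
          Finset.sum_congr rfl (fun j _ => hsplit_int s j)
      _ = ∑ j, ∫ ω in D j, X s ω ∂(P j) + ∑ j, ∫ ω in C j, X s ω ∂(P j) :=
          Finset.sum_add_distrib
      _ = ∑ j, ∫ ω in D j, X t ω ∂(P j) + ∑ j, ∫ ω in C j, X t ω ∂(P j) := by
          rw [hCchain]
          congr 1
          exact Finset.sum_congr rfl (fun j _ => (hmartj j).setIntegral_eq hst (hDFs j))
      _ = ∑ j, (∫ ω in D j, X t ω ∂(P j) + ∫ ω in C j, X t ω ∂(P j)) :=
          Finset.sum_add_distrib.symm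
      _ = ∑ j, ∫ ω in B ∩ A j, X t ω ∂(P j) :=
          Finset.sum_congr rfl (fun j _ => (hsplit_int t j).symm)
  -- conclude
  refine martingale_iff.mpr ⟨?_, ?_⟩
  · have hsubneg : Submartingale (-X) F Phat := by
      refine submartingale_of_setIntegral_le hmart0.1.neg (fun u => (hintPhat u).neg) ?_
      intro i j hij s hs
      simp only [Pi.neg_apply, integral_neg]
      exact neg_le_neg (le_of_eq (key i j hij s hs).symm)
    simpa using hsubneg.neg
  · exact submartingale_of_setIntegral_le hmart0.1 hintPhat
      (fun i j hij s hs => le_of_eq (key i j hij s hs))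
end

section
/- Let (Ω, 𝒢) be a measurable space with a filtration (F_t)_{t∈[0,1]}, τ : Ω → [0,1] a stopping time, and F_τ := { A ∈ 𝒢 : A ∩ {τ ≤ t} ∈ F_t for all t ∈ [0,1] }. Let P, P₁, …, Pₙ be probability measures on 𝒢 with Pⱼ(A) = P(A) for every A ∈ F_τ and every j, let A₁, …, Aₙ ∈ F_τ be pairwise disjoint with A₁ ∪ … ∪ Aₙ = Ω, and let P̂ be the pasted measure. Let X : [0,1] × Ω → ℝ be adapted to (F_t) with right-continuous paths, and assume that under P and under each Pⱼ the family { X_σ : σ a stopping time with σ ≤ 1 } is uniformly integrable. If X is a supermartingale with respect to (F_t) under P and under each Pⱼ, then X is a supermartingale with respect to (F_t) under P̂. -/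
open MeasureTheory Filter Set Topology

noncomputable section

namespace Stmt9Aux

lemma two_pow_pos (n : ℕ) : (0:ℝ) < 2 ^ n := by positivity

/-- dyadic ceiling map on the unit interval -/
def capp (n : ℕ) (x : unitInterval) : unitInterval :=
  ⟨(⌈(x : ℝ) * 2 ^ n⌉.toNat : ℝ) / 2 ^ n, by
    have hx0 : (0:ℝ) ≤ x := x.2.1
    have hx1 : (x:ℝ) ≤ 1 := x.2.2
    have hy0 : (0:ℝ) ≤ (x : ℝ) * 2 ^ n := by positivity
    constructor
    · positivity
    · rw [div_le_one (two_pow_pos n)]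
      have h1 : ((⌈(x : ℝ) * 2 ^ n⌉.toNat : ℤ) : ℝ) = ((⌈(x : ℝ) * 2 ^ n⌉ : ℤ) : ℝ) := by
        rw [Int.toNat_of_nonneg (Int.ceil_nonneg hy0)]
      have h2 : ⌈(x : ℝ) * 2 ^ n⌉ ≤ (2 ^ n : ℤ) := by
        rw [Int.ceil_le]
        push_cast
        nlinarith [two_pow_pos n]
      calc (⌈(x : ℝ) * 2 ^ n⌉.toNat : ℝ) = ((⌈(x : ℝ) * 2 ^ n⌉.toNat : ℤ) : ℝ) := by push_cast; ring
        _ = ((⌈(x : ℝ) * 2 ^ n⌉ : ℤ) : ℝ) := h1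
        _ ≤ ((2 ^ n : ℤ) : ℝ) := by exact_mod_cast h2
        _ = 2 ^ n := by push_cast; ring⟩

lemma capp_coe (n : ℕ) (x : unitInterval) :
    (capp n x : ℝ) = ((⌈(x : ℝ) * 2 ^ n⌉ : ℤ) : ℝ) / 2 ^ n := by
  have hy0 : (0:ℝ) ≤ (x : ℝ) * 2 ^ n := by
    have hx0 : (0:ℝ) ≤ x := x.2.1; positivity
  show ((⌈(x : ℝ) * 2 ^ n⌉.toNat : ℕ) : ℝ) / 2 ^ n = _
  congr 1
  rw [← Int.cast_natCast, Int.toNat_of_nonneg (Int.ceil_nonneg hy0)]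

/-- dyadic floor map on the unit interval -/
def fapp (n : ℕ) (u : unitInterval) : unitInterval :=
  ⟨(⌊(u : ℝ) * 2 ^ n⌋.toNat : ℝ) / 2 ^ n, by
    have hx0 : (0:ℝ) ≤ u := u.2.1
    have hx1 : (u:ℝ) ≤ 1 := u.2.2
    constructor
    · positivity
    · rw [div_le_one (two_pow_pos n)]
      have h2 : (⌊(u : ℝ) * 2 ^ n⌋ : ℤ) ≤ 2 ^ n := by
        have := Int.floor_le ((u : ℝ) * 2 ^ n)
        have hle : (u : ℝ) * 2 ^ n ≤ 2 ^ n := by nlinarith [two_pow_pos n]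
        have h3 : ((⌊(u : ℝ) * 2 ^ n⌋ : ℤ) : ℝ) ≤ 2 ^ n := (Int.floor_le _).trans hle
        exact_mod_cast h3
      calc (⌊(u : ℝ) * 2 ^ n⌋.toNat : ℝ) ≤ ((2^n : ℕ) : ℝ) := by
            exact_mod_cast Int.toNat_le_toNat h2 |>.trans (by simp)
        _ = 2 ^ n := by push_cast; ring⟩

lemma fapp_coe_nonneg_case (n : ℕ) (u : unitInterval) :
    (fapp n u : ℝ) = ((⌊(u : ℝ) * 2 ^ n⌋ : ℤ) : ℝ) / 2 ^ n := by
  have hy0 : (0:ℝ) ≤ (u : ℝ) * 2 ^ n := by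
    have hx0 : (0:ℝ) ≤ u := u.2.1; positivity
  show ((⌊(u : ℝ) * 2 ^ n⌋.toNat : ℕ) : ℝ) / 2 ^ n = _
  congr 1
  rw [← Int.cast_natCast, Int.toNat_of_nonneg (Int.floor_nonneg.mpr hy0)]

lemma le_capp (n : ℕ) (x : unitInterval) : x ≤ capp n x := by
  rw [← Subtype.coe_le_coe, capp_coe]
  rw [le_div_iff₀ (two_pow_pos n)]
  exact Int.le_ceil _

lemma capp_coe_le (n : ℕ) (x : unitInterval) : (capp n x : ℝ) ≤ (x : ℝ) + (2 ^ n)⁻¹ := by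
  rw [capp_coe, div_le_iff₀ (two_pow_pos n)]
  have := (Int.ceil_lt_add_one ((x : ℝ) * 2 ^ n)).le
  calc ((⌈(x : ℝ) * 2 ^ n⌉ : ℤ) : ℝ) ≤ (x : ℝ) * 2 ^ n + 1 := this
    _ = ((x : ℝ) + (2 ^ n)⁻¹) * 2 ^ n := by field_simp

lemma capp_le_iff {n : ℕ} {x u : unitInterval} : capp n x ≤ u ↔ x ≤ fapp n u := by
  rw [← Subtype.coe_le_coe, ← Subtype.coe_le_coe, capp_coe, fapp_coe_nonneg_case]
  rw [div_le_iff₀ (two_pow_pos n), le_div_iff₀ (two_pow_pos n)]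
  constructor
  · intro h
    have h1 : ⌈(x : ℝ) * 2 ^ n⌉ ≤ ⌊(u : ℝ) * 2 ^ n⌋ := Int.le_floor.mpr h
    have h2 : (x : ℝ) * 2 ^ n ≤ ⌈(x : ℝ) * 2 ^ n⌉ := Int.le_ceil _
    calc (x : ℝ) * 2 ^ n ≤ ((⌈(x : ℝ) * 2 ^ n⌉ : ℤ) : ℝ) := h2
      _ ≤ _ := by exact_mod_cast h1
  · intro h
    have h1 : ⌈(x : ℝ) * 2 ^ n⌉ ≤ ⌊(u : ℝ) * 2 ^ n⌋ := by
      rw [Int.ceil_le]; exact h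
    calc ((⌈(x : ℝ) * 2 ^ n⌉ : ℤ) : ℝ) ≤ ((⌊(u : ℝ) * 2 ^ n⌋ : ℤ) : ℝ) := by exact_mod_cast h1
      _ ≤ (u : ℝ) * 2 ^ n := Int.floor_le _

lemma fapp_le (n : ℕ) (u : unitInterval) : fapp n u ≤ u := by
  rw [← Subtype.coe_le_coe, fapp_coe_nonneg_case, div_le_iff₀ (two_pow_pos n)]
  exact Int.floor_le _

lemma capp_mono (n : ℕ) : Monotone (capp n) := by
  intro x y hxy
  rw [← Subtype.coe_le_coe, capp_coe, capp_coe]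
  have h : ⌈(x : ℝ) * 2 ^ n⌉ ≤ ⌈(y : ℝ) * 2 ^ n⌉ :=
    Int.ceil_mono (by nlinarith [two_pow_pos n, Subtype.coe_le_coe.mpr hxy])
  gcongr


lemma tendsto_capp (x : unitInterval) : Tendsto (fun n => capp n x) atTop (𝓝 x) := by
  rw [tendsto_subtype_rng]
  have h1 : Tendsto (fun n : ℕ => (x : ℝ) + (2 ^ n)⁻¹) atTop (𝓝 ((x : ℝ) + 0)) := by
    refine tendsto_const_nhds.add ?_
    simp_rw [← inv_pow]
    exact tendsto_pow_atTop_nhds_zero_of_lt_one (by norm_num) (by norm_num)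
  have := tendsto_of_tendsto_of_tendsto_of_le_of_le (tendsto_const_nhds (x := (x:ℝ)))
    (by simpa using h1) (fun n => Subtype.coe_le_coe.mpr (le_capp n x)) (fun n => capp_coe_le n x)
  exact this

/-- the dyadic grid as a finset -/
def grid (n : ℕ) : Finset unitInterval :=
  (Finset.range (2 ^ n + 1)).image fun k : ℕ => ⟨min 1 ((k : ℝ) / 2 ^ n), by
    constructor
    · exact le_min zero_le_one (by positivity)
    · exact min_le_left _ _⟩

lemma capp_mem_grid (n : ℕ) (x : unitInterval) : capp n x ∈ grid n := by
  rw [grid, Finset.mem_image]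
  refine ⟨⌈(x : ℝ) * 2 ^ n⌉.toNat, ?_, ?_⟩
  · rw [Finset.mem_range]
    have h2 : (⌈(x : ℝ) * 2 ^ n⌉.toNat : ℝ) ≤ 2 ^ n := by
      have := (capp n x).2.2
      rw [show ((capp n x : ℝ)) = (⌈(x : ℝ) * 2 ^ n⌉.toNat : ℝ) / 2 ^ n from rfl,
        div_le_one (two_pow_pos n)] at this
      exact this
    have : (⌈(x : ℝ) * 2 ^ n⌉.toNat : ℝ) ≤ ((2 ^ n : ℕ) : ℝ) := by push_cast at h2 ⊢; linarith
    have h3 : ⌈(x : ℝ) * 2 ^ n⌉.toNat ≤ 2 ^ n := by exact_mod_cast this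
    omega
  · apply Subtype.ext
    show min 1 ((⌈(x : ℝ) * 2 ^ n⌉.toNat : ℝ) / 2 ^ n) = ((capp n x : ℝ))
    rw [min_eq_right (show (⌈(x : ℝ) * 2 ^ n⌉.toNat : ℝ) / 2 ^ n ≤ 1 from (capp n x).2.2)]
    rfl

variable {Ω : Type*} {𝒢 : MeasurableSpace Ω} {F : Filtration unitInterval 𝒢}

lemma isStoppingTime_capp {ρ : Ω → unitInterval} (hρ : IsStoppingTime F (fun ω => (ρ ω : WithTop unitInterval))) (n : ℕ) :
    IsStoppingTime F fun ω => ((capp n (ρ ω) : unitInterval) : WithTop unitInterval) := by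
  intro u
  have h : {ω | ((capp n (ρ ω) : unitInterval) : WithTop unitInterval) ≤ (u : WithTop unitInterval)}
      = {ω | (ρ ω : WithTop unitInterval) ≤ (fapp n u : WithTop unitInterval)} := by
    ext ω; exact WithTop.coe_le_coe.trans (capp_le_iff.trans WithTop.coe_le_coe.symm)
  beta_reduce
  rw [h]
  exact F.mono (fapp_le n u) _ (hρ (fapp n u))

variable {X : unitInterval → Ω → ℝ} {Q : Measure Ω}

/-- every stopped value is integrable, given the uniform integrability assumption -/
lemma integrable_sv
    (hui : UniformIntegrable
      (fun (σ : {σ : Ω → unitInterval // IsStoppingTime F (fun ω => (σ ω : WithTop unitInterval))}) ω => X (σ.1 ω) ω) 1 Q)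
    {η : Ω → unitInterval} (hη : IsStoppingTime F (fun ω => (η ω : WithTop unitInterval))) :
    Integrable (stoppedValue X (fun ω => (η ω : WithTop unitInterval))) Q := by
  obtain ⟨hmeas, _, M, hM⟩ := hui
  exact memLp_one_iff_integrable.mp
    ⟨hmeas ⟨η, hη⟩, (hM ⟨η, hη⟩).trans_lt ENNReal.coe_lt_top⟩

lemma tendsto_sv (hrc : ∀ ω, ∀ t : unitInterval, ContinuousWithinAt (fun u => X u ω) (Set.Ici t) t)
    {ρ : Ω → unitInterval} {ρn : ℕ → Ω → unitInterval}
    (hge : ∀ k ω, ρ ω ≤ ρn k ω) (hconv : ∀ ω, Tendsto (fun k => ρn k ω) atTop (𝓝 (ρ ω))) (ω : Ω) :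
    Tendsto (fun k => stoppedValue X (fun ω => (ρn k ω : WithTop unitInterval)) ω) atTop (𝓝 (stoppedValue X (fun ω => (ρ ω : WithTop unitInterval)) ω)) := by
  have h1 : Tendsto (fun k => ρn k ω) atTop (𝓝[Set.Ici (ρ ω)] (ρ ω)) :=
    tendsto_nhdsWithin_iff.mpr ⟨hconv ω, Eventually.of_forall fun k => hge k ω⟩
  exact (hrc ω (ρ ω)).tendsto.comp h1

lemma lemLim [IsFiniteMeasure Q]
    (hui : UniformIntegrable
      (fun (σ : {σ : Ω → unitInterval // IsStoppingTime F (fun ω => (σ ω : WithTop unitInterval))}) ω => X (σ.1 ω) ω) 1 Q)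
    (hrc : ∀ ω, ∀ t : unitInterval, ContinuousWithinAt (fun u => X u ω) (Set.Ici t) t)
    {ρ : Ω → unitInterval} (hρ : IsStoppingTime F (fun ω => (ρ ω : WithTop unitInterval)))
    {ρn : ℕ → Ω → unitInterval} (hρn : ∀ k, IsStoppingTime F (fun ω => (ρn k ω : WithTop unitInterval)))
    (hge : ∀ k ω, ρ ω ≤ ρn k ω) (hconv : ∀ ω, Tendsto (fun k => ρn k ω) atTop (𝓝 (ρ ω)))
    (C : Set Ω) :
    Tendsto (fun k => ∫ ω in C, stoppedValue X (fun ω => (ρn k ω : WithTop unitInterval)) ω ∂Q) atTop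
      (𝓝 (∫ ω in C, stoppedValue X (fun ω => (ρ ω : WithTop unitInterval)) ω ∂Q)) := by
  obtain ⟨hmeas, hunif, M, hM⟩ := hui
  have hmem : ∀ ⦃σ : Ω → unitInterval⦄, IsStoppingTime F (fun ω => (σ ω : WithTop unitInterval)) → MemLp (stoppedValue X (fun ω => (σ ω : WithTop unitInterval))) 1 Q :=
    fun σ hσ => ⟨hmeas ⟨σ, hσ⟩, (hM ⟨σ, hσ⟩).trans_lt ENNReal.coe_lt_top⟩
  have hL1 : Tendsto
      (fun k => eLpNorm (stoppedValue X (fun ω => (ρn k ω : WithTop unitInterval)) - stoppedValue X (fun ω => (ρ ω : WithTop unitInterval))) 1 Q) atTop (𝓝 0) := by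
    refine tendsto_Lp_finite_of_tendsto_ae le_rfl ENNReal.one_ne_top
      (fun k => hmeas ⟨ρn k, hρn k⟩) (hmem hρ) ?_
      (Eventually.of_forall (tendsto_sv hrc hge hconv))
    intro ε hε
    obtain ⟨δ, hδ, h⟩ := hunif hε
    exact ⟨δ, hδ, fun k => h ⟨ρn k, hρn k⟩⟩
  exact tendsto_setIntegral_of_L1' _ (memLp_one_iff_integrable.mp (hmem hρ)).aestronglyMeasurable
    (Eventually.of_forall fun k => memLp_one_iff_integrable.mp (hmem (hρn k))) hL1 C

lemma integrable_const_time
    (hui : UniformIntegrable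
      (fun (σ : {σ : Ω → unitInterval // IsStoppingTime F (fun ω => (σ ω : WithTop unitInterval))}) ω => X (σ.1 ω) ω) 1 Q)
    (t : unitInterval) : Integrable (X t) Q := by
  have := integrable_sv hui (isStoppingTime_const F t)
  rwa [stoppedValue_const] at this

lemma lemA [IsFiniteMeasure Q] (hsm : Supermartingale X F Q)
    (hui : UniformIntegrable
      (fun (σ : {σ : Ω → unitInterval // IsStoppingTime F (fun ω => (σ ω : WithTop unitInterval))}) ω => X (σ.1 ω) ω) 1 Q)
    {η : Ω → unitInterval} (hη : IsStoppingTime F (fun ω => (η ω : WithTop unitInterval))) (V : Finset unitInterval)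
    (hmem : ∀ ω, η ω ∈ V) {t : unitInterval} (hle : ∀ ω, η ω ≤ t)
    {C : Set Ω} (hC : MeasurableSet[hη.measurableSpace] C) :
    ∫ ω in C, X t ω ∂Q ≤ ∫ ω in C, stoppedValue X (fun ω => (η ω : WithTop unitInterval)) ω ∂Q := by
  classical
  have hcount : (Set.range η).Countable :=
    (V.finite_toSet.subset (fun x hx => by obtain ⟨ω, rfl⟩ := hx; exact hmem ω)).countable
  set D : unitInterval → Set Ω := fun v => C ∩ {ω | η ω = v} with hD
  have hcount' : (Set.range (fun ω => (η ω : WithTop unitInterval))).Countable :=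
    Set.Countable.mono (by rintro _ ⟨ω, rfl⟩; exact ⟨η ω, ⟨ω, rfl⟩, rfl⟩) (hcount.image _)
  have hDm : ∀ v, MeasurableSet[F v] (D v) := fun v => by
    have h := (hη.measurableSet_inter_eq_iff C v).mp
      (hC.inter (hη.measurableSet_eq_of_countable_range' hcount' v))
    simpa only [WithTop.coe_inj] using h
  have hDm' : ∀ v, MeasurableSet[𝒢] (D v) := fun v => F.le v _ (hDm v)
  have hCeq : C = ⋃ v ∈ V, D v := by
    ext ω
    simp only [hD, Set.mem_iUnion, Set.mem_inter_iff, Set.mem_setOf_eq, exists_prop]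
    exact ⟨fun h => ⟨η ω, hmem ω, h, rfl⟩, fun ⟨v, _, h, _⟩ => h⟩
  have hdisj : (↑V : Set unitInterval).Pairwise (Function.onFun Disjoint D) := by
    intro a _ b _ hab
    refine Set.disjoint_left.mpr fun ω hωa hωb => hab ?_
    rw [← hωa.2, ← hωb.2]
  have hXt : Integrable (X t) Q := integrable_const_time hui t
  have hsv : Integrable (stoppedValue X (fun ω => (η ω : WithTop unitInterval))) Q := integrable_sv hui hη
  rw [hCeq, integral_biUnion_finset V (fun v _ => hDm' v) hdisj (fun v _ => hXt.integrableOn),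
    integral_biUnion_finset V (fun v _ => hDm' v) hdisj (fun v _ => hsv.integrableOn)]
  refine Finset.sum_le_sum fun v _ => ?_
  by_cases hvt : v ≤ t
  · calc ∫ ω in D v, X t ω ∂Q ≤ ∫ ω in D v, X v ω ∂Q := hsm.setIntegral_le hvt (hDm v)
      _ = ∫ ω in D v, stoppedValue X (fun ω => (η ω : WithTop unitInterval)) ω ∂Q := by
          refine setIntegral_congr_fun (hDm' v) fun ω hω => ?_
          show X v ω = X (η ω) ω
          rw [hω.2]
  · have hempty : D v = ∅ := by
      ext ω
      simp only [hD, Set.mem_inter_iff, Set.mem_setOf_eq, Set.mem_empty_iff_false, iff_false]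
      rintro ⟨-, h⟩
      exact hvt (h ▸ hle ω)
    simp [hempty]

lemma lemB [IsFiniteMeasure Q] (hsm : Supermartingale X F Q)
    (hui : UniformIntegrable
      (fun (σ : {σ : Ω → unitInterval // IsStoppingTime F (fun ω => (σ ω : WithTop unitInterval))}) ω => X (σ.1 ω) ω) 1 Q)
    {s : unitInterval} (V : Finset unitInterval) :
    ∀ η : Ω → unitInterval, IsStoppingTime F (fun ω => (η ω : WithTop unitInterval)) → (∀ ω, s ≤ η ω) → (∀ ω, η ω ∈ insert s V) →
      ∀ C : Set Ω, MeasurableSet[F s] C →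
      ∫ ω in C, stoppedValue X (fun ω => (η ω : WithTop unitInterval)) ω ∂Q ≤ ∫ ω in C, X s ω ∂Q := by
  classical
  induction V using Finset.induction_on_max with
  | empty =>
    intro η hη hsle hmem C hC
    have heq : stoppedValue X (fun ω => (η ω : WithTop unitInterval)) = X s := by
      funext ω
      have h := hmem ω
      simp only [Finset.mem_insert, Finset.notMem_empty, or_false] at h
      show X (η ω) ω = X s ω
      rw [h]
    rw [heq]
  | insert a V' hlt IH =>
    intro η hη hsle hmem C hC
    rcases le_or_gt a s with has | hsa
    · refine IH η hη hsle (fun ω => ?_) C hC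
      rcases Finset.mem_insert.mp (hmem ω) with h | h
      · exact Finset.mem_insert.mpr (Or.inl h)
      rcases Finset.mem_insert.mp h with h | h
      · exact Finset.mem_insert.mpr (Or.inl (le_antisymm (h ▸ has) (hsle ω)))
      · exact absurd (hsle ω) (not_le.mpr (lt_of_lt_of_le (hlt _ h) has))
    · set W : Finset unitInterval := insert s V' with hW
      have hWne : W.Nonempty := Finset.insert_nonempty _ _
      set b : unitInterval := W.max' hWne with hb
      have hsb : s ≤ b := W.le_max' s (Finset.mem_insert_self _ _)
      have hba : b < a := by
        rcases Finset.mem_insert.mp (W.max'_mem hWne) with h | h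
        · exact lt_of_eq_of_lt h hsa
        · exact hlt _ h
      have hub : ∀ ω, η ω ≠ a → η ω ≤ b := by
        intro ω hne
        rcases Finset.mem_insert.mp (hmem ω) with h | h
        · exact h ▸ hsb
        rcases Finset.mem_insert.mp h with h | h
        · exact absurd h hne
        · exact W.le_max' _ (Finset.mem_insert_of_mem h)
      have hGa : {ω | η ω = a} = {ω | η ω ≤ b}ᶜ := by
        ext ω
        simp only [Set.mem_setOf_eq, Set.mem_compl_iff, not_le]
        constructor
        · intro h; rw [h]; exact hba
        · intro h
          by_contra hne
          exact absurd (hub ω hne) (not_le.mpr h)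
      set η' : Ω → unitInterval := fun ω => if η ω = a then b else η ω with hη'def
      have hη'mem : ∀ ω, η' ω ∈ insert s V' := by
        intro ω
        by_cases h : η ω = a
        · simp only [hη'def, h, if_pos rfl]
          exact W.max'_mem hWne
        · simp only [hη'def, if_neg h]
          rcases Finset.mem_insert.mp (hmem ω) with h' | h'
          · exact Finset.mem_insert.mpr (Or.inl h')
          rcases Finset.mem_insert.mp h' with h' | h'
          · exact absurd h' h
          · exact Finset.mem_insert_of_mem h'
      have hη's : ∀ ω, s ≤ η' ω := by
        intro ω
        by_cases h : η ω = a
        · simp only [hη'def, h, if_pos rfl]; exact hsb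
        · simp only [hη'def, if_neg h]; exact hsle ω
      have hη0 : ∀ u, MeasurableSet[F u] {ω | η ω ≤ u} := fun u => by
        simpa only [WithTop.coe_le_coe] using hη u
      have hη'st : IsStoppingTime F (fun ω => (η' ω : WithTop unitInterval)) := by
        intro u
        simp only [WithTop.coe_le_coe]
        rcases le_or_gt b u with hbu | hub'
        · have heq : {ω | η' ω ≤ u} = {ω | η ω ≤ u} ∪ {ω | η ω ≤ b}ᶜ := by
            ext ω
            simp only [Set.mem_union, Set.mem_setOf_eq, Set.mem_compl_iff, not_le]
            by_cases h : η ω = a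
            · constructor
              · intro _; exact Or.inr (by rw [h]; exact hba)
              · intro _; simp only [hη'def, h, if_pos rfl]; exact hbu
            · simp only [hη'def, if_neg h]
              constructor
              · exact fun h' => Or.inl h'
              · rintro (h' | h')
                · exact h'
                · exact absurd (hub ω h) (not_le.mpr h')
          rw [heq]
          exact (hη0 u).union ((F.mono hbu _ (hη0 b)).compl)
        · have heq : {ω | η' ω ≤ u} = {ω | η ω ≤ u} := by
            ext ω
            simp only [Set.mem_setOf_eq]
            by_cases h : η ω = a
            · simp only [hη'def, h, if_pos rfl]
              constructor
              · intro h'; exact absurd h' (not_le.mpr hub')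
              · intro h'; exact absurd h' (not_le.mpr (hub'.trans hba))
            · simp only [hη'def, if_neg h]
          rw [heq]
          exact hη0 u
      -- pointwise decomposition
      have hkey : stoppedValue X (fun ω => (η ω : WithTop unitInterval)) = fun ω =>
          stoppedValue X (fun ω => (η' ω : WithTop unitInterval)) ω + ({ω | η ω ≤ b}ᶜ).indicator (fun ω => X a ω - X b ω) ω := by
        funext ω
        by_cases h : η ω = a
        · have hmemc : ω ∈ ({ω | η ω ≤ b}ᶜ : Set Ω) := by
            simp only [Set.mem_compl_iff, Set.mem_setOf_eq, not_le]
            rw [h]; exact hba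
          rw [Set.indicator_of_mem hmemc]
          show X (η ω) ω = X (η' ω) ω + (X a ω - X b ω)
          have heb : η' ω = b := by simp only [hη'def]; rw [if_pos h]
          rw [heb, h]
          ring
        · have hmemc : ω ∉ ({ω | η ω ≤ b}ᶜ : Set Ω) := by
            simp only [Set.mem_compl_iff, Set.mem_setOf_eq, not_le, not_lt, not_not]
            exact hub ω h
          rw [Set.indicator_of_notMem hmemc]
          show X (η ω) ω = X (η' ω) ω + 0
          have heb : η' ω = η ω := by simp only [hη'def]; rw [if_neg h]
          rw [heb, add_zero]
      have hGm : MeasurableSet[F b] ({ω | η ω ≤ b}ᶜ) := (hη0 b).compl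
      have hGm' : MeasurableSet[𝒢] ({ω | η ω ≤ b}ᶜ) := F.le b _ hGm
      have hXa : Integrable (X a) Q := integrable_const_time hui a
      have hXb : Integrable (X b) Q := integrable_const_time hui b
      have hsub : Integrable (fun ω => X a ω - X b ω) Q := hXa.sub hXb
      have hCGm : MeasurableSet[F b] (C ∩ {ω | η ω ≤ b}ᶜ) := (F.mono hsb _ hC).inter hGm
      have hstep : ∫ ω in C ∩ {ω | η ω ≤ b}ᶜ, (X a ω - X b ω) ∂Q ≤ 0 := by
        have h1 : ∫ ω in C ∩ {ω | η ω ≤ b}ᶜ, X a ω ∂Q ≤ ∫ ω in C ∩ {ω | η ω ≤ b}ᶜ, X b ω ∂Q :=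
          hsm.setIntegral_le hba.le hCGm
        rw [integral_sub hXa.integrableOn hXb.integrableOn]
        linarith
      calc ∫ ω in C, stoppedValue X (fun ω => (η ω : WithTop unitInterval)) ω ∂Q
          = ∫ ω in C, stoppedValue X (fun ω => (η' ω : WithTop unitInterval)) ω ∂Q
            + ∫ ω in C, ({ω | η ω ≤ b}ᶜ).indicator (fun ω => X a ω - X b ω) ω ∂Q := by
            rw [← integral_add ((integrable_sv hui hη'st).restrict)
              ((hsub.indicator hGm').restrict)]
            rw [hkey]
        _ = ∫ ω in C, stoppedValue X (fun ω => (η' ω : WithTop unitInterval)) ω ∂Q + ∫ ω in C ∩ {ω | η ω ≤ b}ᶜ, (X a ω - X b ω) ∂Q := by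
            rw [setIntegral_indicator hGm']
        _ ≤ ∫ ω in C, stoppedValue X (fun ω => (η' ω : WithTop unitInterval)) ω ∂Q + 0 := by linarith
        _ ≤ ∫ ω in C, X s ω ∂Q := by
            rw [add_zero]
            exact IH η' hη'st hη's hη'mem C hC

lemma osA [IsFiniteMeasure Q] (hsm : Supermartingale X F Q)
    (hui : UniformIntegrable
      (fun (σ : {σ : Ω → unitInterval // IsStoppingTime F (fun ω => (σ ω : WithTop unitInterval))}) ω => X (σ.1 ω) ω) 1 Q)
    (hrc : ∀ ω, ∀ t : unitInterval, ContinuousWithinAt (fun u => X u ω) (Set.Ici t) t)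
    {ρ : Ω → unitInterval} (hρ : IsStoppingTime F (fun ω => (ρ ω : WithTop unitInterval))) {t : unitInterval} (hρt : ∀ ω, ρ ω ≤ t)
    {C : Set Ω} (hC : MeasurableSet[hρ.measurableSpace] C) :
    ∫ ω in C, X t ω ∂Q ≤ ∫ ω in C, stoppedValue X (fun ω => (ρ ω : WithTop unitInterval)) ω ∂Q := by
  classical
  set ρn : ℕ → Ω → unitInterval := fun k ω => min (capp k (ρ ω)) t with hρndef
  have hρnst : ∀ k, IsStoppingTime F (fun ω => (ρn k ω : WithTop unitInterval)) := fun k => (isStoppingTime_capp hρ k).min_const t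
  have hge : ∀ k ω, ρ ω ≤ ρn k ω := fun k ω => le_min (le_capp _ _) (hρt ω)
  have hconv : ∀ ω, Tendsto (fun k => ρn k ω) atTop (𝓝 (ρ ω)) := by
    intro ω
    have h := (tendsto_capp (ρ ω)).min (tendsto_const_nhds (x := t))
    rwa [min_eq_left (hρt ω)] at h
  have hstep : ∀ k, ∫ ω in C, X t ω ∂Q ≤ ∫ ω in C, stoppedValue X (fun ω => (ρn k ω : WithTop unitInterval)) ω ∂Q := by
    intro k
    refine lemA hsm hui (hρnst k) ((grid k).image (fun v => min v t))
      (fun ω => Finset.mem_image_of_mem _ (capp_mem_grid k (ρ ω)))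
      (fun ω => min_le_right _ _) ?_
    exact (hρ.measurableSpace_mono (hρnst k) (fun ω => WithTop.coe_le_coe.mpr (hge k ω))) _ hC
  exact ge_of_tendsto (lemLim hui hrc hρ hρnst hge hconv C) (Eventually.of_forall hstep)

lemma osB [IsFiniteMeasure Q] (hsm : Supermartingale X F Q)
    (hui : UniformIntegrable
      (fun (σ : {σ : Ω → unitInterval // IsStoppingTime F (fun ω => (σ ω : WithTop unitInterval))}) ω => X (σ.1 ω) ω) 1 Q)
    (hrc : ∀ ω, ∀ t : unitInterval, ContinuousWithinAt (fun u => X u ω) (Set.Ici t) t)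
    {ρ : Ω → unitInterval} (hρ : IsStoppingTime F (fun ω => (ρ ω : WithTop unitInterval))) {s : unitInterval} (hsρ : ∀ ω, s ≤ ρ ω)
    {C : Set Ω} (hC : MeasurableSet[F s] C) :
    ∫ ω in C, stoppedValue X (fun ω => (ρ ω : WithTop unitInterval)) ω ∂Q ≤ ∫ ω in C, X s ω ∂Q := by
  classical
  set ρn : ℕ → Ω → unitInterval := fun k ω => capp k (ρ ω) with hρndef
  have hρnst : ∀ k, IsStoppingTime F (fun ω => (ρn k ω : WithTop unitInterval)) := fun k => isStoppingTime_capp hρ k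
  have hge : ∀ k ω, ρ ω ≤ ρn k ω := fun k ω => le_capp _ _
  have hconv : ∀ ω, Tendsto (fun k => ρn k ω) atTop (𝓝 (ρ ω)) := fun ω => tendsto_capp (ρ ω)
  have hstep : ∀ k, ∫ ω in C, stoppedValue X (fun ω => (ρn k ω : WithTop unitInterval)) ω ∂Q ≤ ∫ ω in C, X s ω ∂Q := by
    intro k
    exact lemB hsm hui (grid k) (ρn k) (hρnst k) (fun ω => (hsρ ω).trans (le_capp _ _))
      (fun ω => Finset.mem_insert_of_mem (capp_mem_grid k (ρ ω))) C hC
  exact le_of_tendsto (lemLim hui hrc hρ hρnst hge hconv C) (Eventually.of_forall hstep)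

/-- an adapted right-continuous process is progressively measurable -/
lemma progMeas (hadp : Adapted F X)
    (hrc : ∀ ω, ∀ t : unitInterval, ContinuousWithinAt (fun u => X u ω) (Set.Ici t) t) :
    ProgMeasurable F X := by
  classical
  intro i
  have key : ∀ k : ℕ, StronglyMeasurable[Subtype.instMeasurableSpace.prod (F i)]
      (fun p : Set.Iic i × Ω => X (min (capp k (p.1 : unitInterval)) i) p.2) := by
    intro k
    have hgm : @Measurable _ _ (Subtype.instMeasurableSpace.prod (F i)) _
        (fun p : Set.Iic i × Ω => min (capp k (p.1 : unitInterval)) i) :=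
      (((capp_mono k).measurable).comp
        (measurable_subtype_coe.comp (@measurable_fst _ _ _ (F i)))).min measurable_const
    have heq : (fun p : Set.Iic i × Ω => X (min (capp k (p.1 : unitInterval)) i) p.2) =
        fun p => ∑ v ∈ (grid k).image (fun w => min w i),
          ({q : Set.Iic i × Ω | min (capp k (q.1 : unitInterval)) i = v}.indicator
            (fun q => X v q.2)) p := by
      funext p
      rw [Finset.sum_eq_single (min (capp k (p.1 : unitInterval)) i)]
      · rw [Set.indicator_of_mem (by exact rfl : p ∈ _)]
      · intro v _ hv
        exact Set.indicator_of_notMem (fun h => hv (by exact h.symm  )) _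
      · intro hnot
        exact absurd (Finset.mem_image_of_mem _ (capp_mem_grid k (p.1 : unitInterval))) hnot
    rw [heq]
    refine Finset.stronglyMeasurable_fun_sum _ fun v hv => ?_
    have hvle : v ≤ i := by
      rcases Finset.mem_image.mp hv with ⟨w, _, rfl⟩
      exact min_le_right _ _
    refine StronglyMeasurable.indicator ?_ (hgm (measurableSet_singleton v))
    exact ((hadp v).stronglyMeasurable.mono (F.mono hvle)).comp_measurable (@measurable_snd _ _ _ (F i))
  refine @stronglyMeasurable_of_tendsto _ _ _ (Subtype.instMeasurableSpace.prod (F i)) _ _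
    atTop _ _ _ _ key ?_
  rw [tendsto_pi_nhds]
  intro p
  have hle : (p.1 : unitInterval) ≤ i := p.1.2
  have h1 : Tendsto (fun k => min (capp k (p.1 : unitInterval)) i) atTop
      (𝓝 ((p.1 : unitInterval))) := by
    have h := (tendsto_capp (p.1 : unitInterval)).min (tendsto_const_nhds (x := i))
    rwa [min_eq_left hle] at h
  have h2 : Tendsto (fun k => min (capp k (p.1 : unitInterval)) i) atTop
      (𝓝[Set.Ici (p.1 : unitInterval)] ((p.1 : unitInterval))) :=
    tendsto_nhdsWithin_iff.mpr ⟨h1, Eventually.of_forall fun k => le_min (le_capp _ _) hle⟩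
  exact (hrc p.2 (p.1 : unitInterval)).tendsto.comp h2

lemma smStoppedValue (hadp : Adapted F X)
    (hrc : ∀ ω, ∀ t : unitInterval, ContinuousWithinAt (fun u => X u ω) (Set.Ici t) t)
    {τ : Ω → unitInterval} (hτ : IsStoppingTime F (fun ω => (τ ω : WithTop unitInterval))) :
    StronglyMeasurable[hτ.measurableSpace] (stoppedValue X (fun ω => (τ ω : WithTop unitInterval))) :=
  (measurable_stoppedValue (progMeas hadp hrc) hτ).stronglyMeasurable

/-- integrals of `m`-strongly measurable functions agree for measures agreeing on `m` -/
lemma integral_congr_measure_aux {m : MeasurableSpace Ω} (hm : m ≤ 𝒢) {Q Q' : @Measure Ω 𝒢}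
    (h : ∀ B, MeasurableSet[m] B → Q B = Q' B) {g : Ω → ℝ} (hg : StronglyMeasurable[m] g) :
    ∫ ω, g ω ∂Q = ∫ ω, g ω ∂Q' := by
  have htrim : Q.trim hm = Q'.trim hm := by
    refine Measure.ext fun u hu => ?_
    rw [trim_measurableSet_eq hm hu, trim_measurableSet_eq hm hu, h u hu]
  rw [integral_trim hm hg, integral_trim hm hg, htrim]

/-- key measurability: an `F r`-measurable function restricted to an `F_τ`-set on which `r ≤ τ`
is `F_τ`-measurable -/
lemma sm_indicator_of_le {τ : Ω → unitInterval} (hτ : IsStoppingTime F (fun ω => (τ ω : WithTop unitInterval)))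
    {E : Set Ω} (hE : MeasurableSet[hτ.measurableSpace] E) {r : unitInterval}
    (hEr : ∀ ω ∈ E, r ≤ τ ω) {Y : Ω → ℝ} (hY : StronglyMeasurable[F r] Y) :
    StronglyMeasurable[hτ.measurableSpace] (E.indicator Y) := by
  classical
  refine Measurable.stronglyMeasurable ?_
  intro S hS
  have hkey : MeasurableSet[hτ.measurableSpace] (E ∩ Y ⁻¹' S) := by
    refine ⟨hE.1.inter (le_iSup F r _ (hY.measurable hS)), fun u => ?_⟩
    simp only [WithTop.coe_le_coe]
    rcases le_or_gt r u with hru | hur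
    · have heq : E ∩ Y ⁻¹' S ∩ {ω | τ ω ≤ u} = E ∩ {ω | τ ω ≤ u} ∩ Y ⁻¹' S := by
        rw [Set.inter_right_comm]
      rw [heq]
      exact (by simpa only [WithTop.coe_le_coe] using hE.2 u : MeasurableSet[F u] (E ∩ {ω | τ ω ≤ u})).inter (F.mono hru _ (hY.measurable hS))
    · have heq : E ∩ Y ⁻¹' S ∩ {ω | τ ω ≤ u} = ∅ := by
        ext ω
        simp only [Set.mem_inter_iff, Set.mem_setOf_eq, Set.mem_empty_iff_false, iff_false,
          not_and, and_imp]
        intro hωE _ hωu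
        exact absurd ((hEr ω hωE).trans hωu) (not_le.mpr hur)
      rw [heq]
      exact @MeasurableSet.empty _ (F u)
  have hpre : E.indicator Y ⁻¹' S =
      (E ∩ Y ⁻¹' S) ∪ (Eᶜ ∩ (if (0:ℝ) ∈ S then Set.univ else ∅)) := by
    ext ω
    by_cases hω : ω ∈ E
    · simp only [Set.mem_preimage, Set.indicator_of_mem hω, Set.mem_union, Set.mem_inter_iff,
        Set.mem_compl_iff, hω, not_true_eq_false, false_and, or_false, true_and]
    · simp only [Set.mem_preimage, Set.indicator_of_notMem hω, Set.mem_union, Set.mem_inter_iff,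
        Set.mem_compl_iff, hω, not_false_eq_true, true_and, false_and, false_or]
      split_ifs with h0
      · simp [h0]
      · simp [h0]
  rw [hpre]
  by_cases h0 : (0:ℝ) ∈ S
  · simp only [h0, if_true, Set.inter_univ]
    exact hkey.union hE.compl
  · simp only [h0, if_false, Set.inter_empty, Set.union_empty]
    exact hkey

/-- an `F s` set intersected with `{s < τ}` is in `F_τ` -/
lemma measurableSet_inter_gt {τ : Ω → unitInterval} (hτ : IsStoppingTime F (fun ω => (τ ω : WithTop unitInterval)))
    {s : unitInterval} {B : Set Ω} (hB : MeasurableSet[F s] B) :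
    MeasurableSet[hτ.measurableSpace] (B ∩ {ω | s < τ ω}) := by
  have hτ0 : ∀ u, MeasurableSet[F u] {ω | τ ω ≤ u} := fun u => by
    simpa only [WithTop.coe_le_coe] using hτ u
  refine ⟨(le_iSup F s _ hB).inter (by simpa only [WithTop.coe_lt_coe] using (hτ.measurableSet_gt' s).1),
    fun u => ?_⟩
  simp only [WithTop.coe_le_coe]
  rcases le_or_gt s u with hsu | hus
  · have heq : B ∩ {ω | s < τ ω} ∩ {ω | τ ω ≤ u} =
        B ∩ ({ω | τ ω ≤ s}ᶜ) ∩ {ω | τ ω ≤ u} := by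
      ext ω
      simp only [Set.mem_inter_iff, Set.mem_setOf_eq, Set.mem_compl_iff, not_le]
    rw [heq]
    exact ((F.mono hsu _ hB).inter ((F.mono hsu _ (hτ0 s)).compl)).inter (hτ0 u)
  · have heq : B ∩ {ω | s < τ ω} ∩ {ω | τ ω ≤ u} = ∅ := by
      ext ω
      simp only [Set.mem_inter_iff, Set.mem_setOf_eq, Set.mem_empty_iff_false, iff_false,
        not_and, and_imp]
      intro _ hsω hωu
      exact absurd (hsω.trans_le hωu) (not_lt.mpr hus.le)
    rw [heq]
    exact @MeasurableSet.empty _ (F u)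

end Stmt9Aux

open Stmt9Aux

/-- pasting finitely many probability measures along an `F_τ`-measurable
partition, where `τ` is a stopping time and all measures agree with `P₀` on `F_τ`,
preserves the supermartingale property of an adapted right-continuous process whose
family of values at stopping times is uniformly integrable under each measure. -/
theorem stmt_9 {Ω : Type*} [𝒢 : MeasurableSpace Ω]
    (F : Filtration unitInterval 𝒢)
    (τ : Ω → unitInterval) (hτ : IsStoppingTime F (fun ω => (τ ω : WithTop unitInterval)))
    {n : ℕ} (P₀ : Measure Ω) [IsProbabilityMeasure P₀]
    (P : Fin n → Measure Ω) [∀ j, IsProbabilityMeasure (P j)]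
    (hagree : ∀ j, ∀ B : Set Ω, MeasurableSet[hτ.measurableSpace] B → P j B = P₀ B)
    (A : Fin n → Set Ω) (hAm : ∀ j, MeasurableSet[hτ.measurableSpace] (A j))
    (hdisj : Pairwise (Function.onFun Disjoint A))
    (hcover : (⋃ j, A j) = Set.univ)
    (Phat : Measure Ω)
    (hPhat : ∀ E : Set Ω, MeasurableSet[𝒢] E → Phat E = ∑ j, P j (E ∩ A j))
    (X : unitInterval → Ω → ℝ)
    (hadp : Adapted F X)
    (hrc : ∀ ω, ∀ t : unitInterval, ContinuousWithinAt (fun s => X s ω) (Set.Ici t) t)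
    (hui0 : UniformIntegrable
      (fun (σ : {σ : Ω → unitInterval // IsStoppingTime F (fun ω => (σ ω : WithTop unitInterval))}) ω => X (σ.1 ω) ω) 1 P₀)
    (huij : ∀ j, UniformIntegrable
      (fun (σ : {σ : Ω → unitInterval // IsStoppingTime F (fun ω => (σ ω : WithTop unitInterval))}) ω => X (σ.1 ω) ω) 1 (P j))
    (hsmart0 : Supermartingale X F P₀) (hsmartj : ∀ j, Supermartingale X F (P j)) :
    Supermartingale X F Phat := by
  classical
  have hle1 : ∀ ω : Ω, τ ω ≤ (1 : unitInterval) := fun ω => unitInterval.le_one'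
  have hm : hτ.measurableSpace ≤ 𝒢 := hτ.measurableSpace_le_of_le (fun ω => WithTop.coe_le_coe.mpr (hle1 ω))
  have hPhat_eq : Phat = ∑ j, (P j).restrict (A j) := by
    refine Measure.ext fun E hE => ?_
    rw [hPhat E hE, Measure.finset_sum_apply]
    exact Finset.sum_congr rfl fun j _ => (Measure.restrict_apply hE).symm
  have hAmG : ∀ j, MeasurableSet[𝒢] (A j) := fun j => hm _ (hAm j)
  have hintj : ∀ j, ∀ {η : Ω → unitInterval}, IsStoppingTime F (fun ω => (η ω : WithTop unitInterval)) →
      Integrable (stoppedValue X (fun ω => (η ω : WithTop unitInterval))) (P j) := fun j _ hη => integrable_sv (huij j) hη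
  have hint0 : ∀ {η : Ω → unitInterval}, IsStoppingTime F (fun ω => (η ω : WithTop unitInterval)) →
      Integrable (stoppedValue X (fun ω => (η ω : WithTop unitInterval))) P₀ := fun hη => integrable_sv hui0 hη
  have hXint : ∀ (u : unitInterval) j, Integrable (X u) (P j) :=
    fun u j => integrable_const_time (huij j) u
  have hXint0 : ∀ u : unitInterval, Integrable (X u) P₀ :=
    fun u => integrable_const_time hui0 u
  haveI : IsFiniteMeasure Phat := by
    constructor
    rw [hPhat Set.univ MeasurableSet.univ]
    exact ENNReal.sum_lt_top.mpr fun j _ => measure_lt_top _ _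
  have hXhat : ∀ u : unitInterval, Integrable (X u) Phat := by
    intro u
    rw [hPhat_eq]
    exact integrable_finset_sum_measure.mpr fun j _ => (hXint u j).restrict
  have hPhat_setInt : ∀ (f : Ω → ℝ) (B' : Set Ω), MeasurableSet[𝒢] B' →
      (∀ j, Integrable f (P j)) →
      ∫ ω in B', f ω ∂Phat = ∑ j, ∫ ω in B' ∩ A j, f ω ∂(P j) := by
    intro f B' hB' hf
    rw [hPhat_eq]
    have hres : (∑ j, (P j).restrict (A j)).restrict B'
        = ∑ j, ((P j).restrict (A j)).restrict B' := by
      refine Measure.ext fun E hE => ?_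
      rw [Measure.restrict_apply hE, Measure.finset_sum_apply, Measure.finset_sum_apply]
      exact Finset.sum_congr rfl fun j _ => (Measure.restrict_apply hE).symm
    rw [hres, integral_finset_sum_measure fun j _ => ((hf j).restrict).restrict]
    refine Finset.sum_congr rfl fun j _ => ?_
    rw [Measure.restrict_restrict hB']
  -- the key set-integral inequality
  have hineq : ∀ s t : unitInterval, s ≤ t → ∀ B : Set Ω, MeasurableSet[F s] B →
      ∫ ω in B, X t ω ∂Phat ≤ ∫ ω in B, X s ω ∂Phat := by
    intro s t hst B hB
    have hBG : MeasurableSet[𝒢] B := F.le s _ hB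
    set Gs : Set Ω := {ω | s < τ ω} with hGsdef
    set ρ : Ω → unitInterval := fun ω => max (min (τ ω) t) s with hρdef
    have hρst : IsStoppingTime F (fun ω => (ρ ω : WithTop unitInterval)) := (hτ.min_const t).max_const s
    have hρ_le_t : ∀ ω, ρ ω ≤ t := fun ω => max_le (min_le_right _ _) hst
    have hs_le_ρ : ∀ ω, s ≤ ρ ω := fun ω => le_max_right _ _
    have hρ_eq_τ : ∀ ω, s < τ ω → τ ω ≤ t → ρ ω = τ ω := by
      intro ω h1 h2
      show max (min (τ ω) t) s = τ ω
      rw [min_eq_left h2, max_eq_left h1.le]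
    have hρ_eq_t : ∀ ω, t < τ ω → ρ ω = t := by
      intro ω h
      show max (min (τ ω) t) s = t
      rw [min_eq_right h.le, max_eq_left hst]
    have hBGs : MeasurableSet[hτ.measurableSpace] (B ∩ Gs) :=
      measurableSet_inter_gt hτ hB
    have hGs_compl : Gs = {ω | τ ω ≤ s}ᶜ := by
      ext ω; simp only [hGsdef, Set.mem_setOf_eq, Set.mem_compl_iff, not_le]
    have hBGs_Fs : MeasurableSet[F s] (B ∩ Gs) := by
      rw [hGs_compl]
      exact hB.inter ((by simpa only [WithTop.coe_le_coe] using hτ s : MeasurableSet[F s] {ω | τ ω ≤ s}).compl)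
    set D : Fin n → Set Ω := fun j => B ∩ (A j ∩ {ω | τ ω ≤ s}) with hDdef
    set C : Fin n → Set Ω := fun j => (B ∩ Gs) ∩ A j with hCdef
    set C1 : Fin n → Set Ω := fun j => C j ∩ {ω | τ ω ≤ t} with hC1def
    set C2 : Fin n → Set Ω := fun j => C j ∩ {ω | t < τ ω} with hC2def
    have hD_Fs : ∀ j, MeasurableSet[F s] (D j) := fun j => hB.inter (by simpa only [WithTop.coe_le_coe] using (hAm j).2 s)
    have hDmG : ∀ j, MeasurableSet[𝒢] (D j) := fun j => F.le s _ (hD_Fs j)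
    have hCm : ∀ j, MeasurableSet[hτ.measurableSpace] (C j) := fun j => hBGs.inter (hAm j)
    have hC1m : ∀ j, MeasurableSet[hτ.measurableSpace] (C1 j) :=
      fun j => (hCm j).inter (by simpa only [WithTop.coe_le_coe] using hτ.measurableSet_le' t)
    have hC2m : ∀ j, MeasurableSet[hτ.measurableSpace] (C2 j) :=
      fun j => (hCm j).inter (by simpa only [WithTop.coe_lt_coe] using hτ.measurableSet_gt' t)
    have hCmG : ∀ j, MeasurableSet[𝒢] (C j) := fun j => hm _ (hCm j)
    have hC1mG : ∀ j, MeasurableSet[𝒢] (C1 j) := fun j => hm _ (hC1m j)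
    have hC2mG : ∀ j, MeasurableSet[𝒢] (C2 j) := fun j => hm _ (hC2m j)
    have hC1ρ : ∀ j, MeasurableSet[hρst.measurableSpace] (C1 j) := by
      intro j
      refine ⟨(hC1m j).1, fun u => ?_⟩
      simp only [WithTop.coe_le_coe]
      rcases le_or_gt t u with htu | hut
      · have h1 : C1 j ∩ {ω | ρ ω ≤ u} = C1 j :=
          Set.inter_eq_left.mpr fun ω _ => (hρ_le_t ω).trans htu
        rw [h1]
        exact F.mono htu _ (by simpa only [WithTop.coe_le_coe] using (hCm j).2 t)
      · rcases le_or_gt s u with hsu | hus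
        · have h1 : C1 j ∩ {ω | ρ ω ≤ u} = C1 j ∩ {ω | τ ω ≤ u} := by
            ext ω
            simp only [Set.mem_inter_iff, Set.mem_setOf_eq, and_congr_right_iff]
            intro _
            constructor
            · intro hρu
              have h2 : min (τ ω) t ≤ u := le_trans (le_max_left _ _) hρu
              rcases min_le_iff.mp h2 with h3 | h3
              · exact h3
              · exact absurd h3 (not_le.mpr hut)
            · intro hτu
              exact max_le ((min_le_left _ _).trans hτu) hsu
          rw [h1]
          exact (by simpa only [WithTop.coe_le_coe] using (hC1m j).2 u)
        · have h1 : C1 j ∩ {ω | ρ ω ≤ u} = ∅ := by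
            ext ω
            simp only [Set.mem_inter_iff, Set.mem_setOf_eq, Set.mem_empty_iff_false, iff_false,
              not_and]
            intro _
            exact not_le.mpr (hus.trans_le (hs_le_ρ ω))
          rw [h1]
          exact @MeasurableSet.empty _ (F u)
    -- set splittings
    have hCsplit : ∀ j, C j = C1 j ∪ C2 j := by
      intro j
      ext ω
      constructor
      · intro h
        rcases le_or_gt (τ ω) t with h2 | h2
        · exact Or.inl ⟨h, h2⟩
        · exact Or.inr ⟨h, h2⟩
      · rintro (h | h) <;> exact h.1
    have hBAsplit : ∀ j, B ∩ A j = D j ∪ C j := by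
      intro j
      ext ω
      constructor
      · rintro ⟨hωB, hωA⟩
        rcases le_or_gt (τ ω) s with h1 | h1
        · exact Or.inl ⟨hωB, hωA, h1⟩
        · exact Or.inr ⟨⟨hωB, h1⟩, hωA⟩
      · rintro (⟨hωB, hωA, -⟩ | ⟨⟨hωB, -⟩, hωA⟩) <;> exact ⟨hωB, hωA⟩
    have hdisjDC : ∀ j, Disjoint (D j) (C j) := by
      intro j
      refine Set.disjoint_left.mpr fun ω hωD hωC => ?_
      have h1' : τ ω ≤ s := hωD.2.2
      have h2' : s < τ ω := hωC.1.2
      exact not_le.mpr h2' h1'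
    have hdisjC12 : ∀ j, Disjoint (C1 j) (C2 j) := by
      intro j
      refine Set.disjoint_left.mpr fun ω h1 h2 => ?_
      have h1' : τ ω ≤ t := h1.2
      have h2' : t < τ ω := h2.2
      exact not_le.mpr h2' h1'
    have hsplit1 : ∀ j (f : Ω → ℝ), Integrable f (P j) →
        ∫ ω in B ∩ A j, f ω ∂(P j) = ∫ ω in D j, f ω ∂(P j) + ∫ ω in C j, f ω ∂(P j) := by
      intro j f hf
      rw [hBAsplit j]
      exact setIntegral_union (hdisjDC j) (hCmG j) hf.integrableOn hf.integrableOn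
    have hsplit2 : ∀ j (Q : Measure Ω) (f : Ω → ℝ), Integrable f Q →
        ∫ ω in C j, f ω ∂Q = ∫ ω in C1 j, f ω ∂Q + ∫ ω in C2 j, f ω ∂Q := by
      intro j Q f hf
      rw [hCsplit j]
      exact setIntegral_union (hdisjC12 j) (hC2mG j) hf.integrableOn hf.integrableOn
    -- strong measurability of the stopped value
    have hsm_svτ : StronglyMeasurable[hτ.measurableSpace] (stoppedValue X (fun ω => (τ ω : WithTop unitInterval))) :=
      smStoppedValue hadp hrc hτ
    -- measure swaps
    have hswapC1 : ∀ j, ∫ ω in C1 j, stoppedValue X (fun ω => (ρ ω : WithTop unitInterval)) ω ∂(P j)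
        = ∫ ω in C1 j, stoppedValue X (fun ω => (ρ ω : WithTop unitInterval)) ω ∂P₀ := by
      intro j
      have hcongr : ∀ (Q : Measure Ω), ∫ ω in C1 j, stoppedValue X (fun ω => (ρ ω : WithTop unitInterval)) ω ∂Q
          = ∫ ω in C1 j, stoppedValue X (fun ω => (τ ω : WithTop unitInterval)) ω ∂Q := by
        intro Q
        refine setIntegral_congr_fun (hC1mG j) fun ω hω => ?_
        show X (ρ ω) ω = X (τ ω) ω
        rw [hρ_eq_τ ω hω.1.1.2 hω.2]
      rw [hcongr (P j), hcongr P₀, ← integral_indicator (hC1mG j), ← integral_indicator (hC1mG j)]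
      exact integral_congr_measure_aux hm (hagree j) (hsm_svτ.indicator (hC1m j))
    have hswapC2 : ∀ j, ∫ ω in C2 j, X t ω ∂(P j) = ∫ ω in C2 j, X t ω ∂P₀ := by
      intro j
      rw [← integral_indicator (hC2mG j), ← integral_indicator (hC2mG j)]
      exact integral_congr_measure_aux hm (hagree j)
        (sm_indicator_of_le hτ (hC2m j) (fun ω hω => hω.2.le) (hadp t).stronglyMeasurable)
    have hswapC : ∀ j, ∫ ω in C j, X s ω ∂(P j) = ∫ ω in C j, X s ω ∂P₀ := by
      intro j
      rw [← integral_indicator (hCmG j), ← integral_indicator (hCmG j)]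
      exact integral_congr_measure_aux hm (hagree j)
        (sm_indicator_of_le hτ (hCm j) (fun ω hω => hω.1.2.le) (hadp s).stronglyMeasurable)
    -- unions over j under P₀
    have hmemA : ∀ ω : Ω, ∃ j, ω ∈ A j := by
      intro ω
      exact Set.mem_iUnion.mp (hcover ▸ Set.mem_univ ω)
    have hpairwise : ∀ (S : Fin n → Set Ω), (∀ j, S j ⊆ A j) →
        (↑(Finset.univ : Finset (Fin n)) : Set (Fin n)).Pairwise (Function.onFun Disjoint S) := by
      intro S hS a _ b _ hab
      exact (hdisj hab).mono (hS a) (hS b)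
    have hsumGen : ∀ (S : Fin n → Set Ω) (U : Set Ω), (∀ j, MeasurableSet[𝒢] (S j)) →
        (∀ j, S j ⊆ A j) → (∀ j, S j = U ∩ A j) → ∀ (f : Ω → ℝ), Integrable f P₀ →
        ∑ j, ∫ ω in S j, f ω ∂P₀ = ∫ ω in U, f ω ∂P₀ := by
      intro S U hSm hSsub hSeq f hf
      have hU : (⋃ j ∈ (Finset.univ : Finset (Fin n)), S j) = U := by
        ext ω
        constructor
        · intro hω
          obtain ⟨j, -, hj⟩ := Set.mem_iUnion₂.mp hω
          rw [hSeq j] at hj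
          exact hj.1
        · intro hω
          obtain ⟨j, hj⟩ := hmemA ω
          exact Set.mem_iUnion₂.mpr ⟨j, Finset.mem_univ j, (hSeq j).symm ▸ ⟨hω, hj⟩⟩
      rw [← hU]
      exact (integral_biUnion_finset Finset.univ (fun j _ => hSm j) (hpairwise S hSsub)
        (fun j _ => hf.integrableOn)).symm
    have hsum1 : ∑ j, ∫ ω in C1 j, stoppedValue X (fun ω => (ρ ω : WithTop unitInterval)) ω ∂P₀
        = ∫ ω in (B ∩ Gs) ∩ {ω | τ ω ≤ t}, stoppedValue X (fun ω => (ρ ω : WithTop unitInterval)) ω ∂P₀ := by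
      refine hsumGen C1 ((B ∩ Gs) ∩ {ω | τ ω ≤ t}) hC1mG
        (fun j => (Set.inter_subset_left).trans Set.inter_subset_right) ?_
        (stoppedValue X (fun ω => (ρ ω : WithTop unitInterval))) (hint0 hρst)
      intro j
      ext ω
      constructor
      · rintro ⟨⟨hBGsω, hAω⟩, hτω⟩
        exact ⟨⟨hBGsω, hτω⟩, hAω⟩
      · rintro ⟨⟨hBGsω, hτω⟩, hAω⟩
        exact ⟨⟨hBGsω, hAω⟩, hτω⟩
    have hsum2 : ∑ j, ∫ ω in C2 j, X t ω ∂P₀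
        = ∫ ω in (B ∩ Gs) ∩ {ω | t < τ ω}, X t ω ∂P₀ := by
      refine hsumGen C2 ((B ∩ Gs) ∩ {ω | t < τ ω}) hC2mG
        (fun j => (Set.inter_subset_left).trans Set.inter_subset_right) ?_
        (X t) (hXint0 t)
      intro j
      ext ω
      constructor
      · rintro ⟨⟨hBGsω, hAω⟩, hτω⟩
        exact ⟨⟨hBGsω, hτω⟩, hAω⟩
      · rintro ⟨⟨hBGsω, hτω⟩, hAω⟩
        exact ⟨⟨hBGsω, hAω⟩, hτω⟩
    have hsumC : ∑ j, ∫ ω in C j, X s ω ∂P₀ = ∫ ω in B ∩ Gs, X s ω ∂P₀ := by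
      refine hsumGen C (B ∩ Gs) hCmG (fun j => Set.inter_subset_right) (fun j => rfl)
        (X s) (hXint0 s)
    have hU1mG : MeasurableSet[𝒢] ((B ∩ Gs) ∩ {ω | τ ω ≤ t}) :=
      hm _ (hBGs.inter (by simpa only [WithTop.coe_le_coe] using hτ.measurableSet_le' t))
    have hU2mG : MeasurableSet[𝒢] ((B ∩ Gs) ∩ {ω | t < τ ω}) :=
      hm _ (hBGs.inter (by simpa only [WithTop.coe_lt_coe] using hτ.measurableSet_gt' t))
    have hU2congr : ∫ ω in (B ∩ Gs) ∩ {ω | t < τ ω}, X t ω ∂P₀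
        = ∫ ω in (B ∩ Gs) ∩ {ω | t < τ ω}, stoppedValue X (fun ω => (ρ ω : WithTop unitInterval)) ω ∂P₀ := by
      refine setIntegral_congr_fun hU2mG fun ω hω => ?_
      show X t ω = X (ρ ω) ω
      rw [hρ_eq_t ω hω.2]
    have hUsplit : ((B ∩ Gs) ∩ {ω | τ ω ≤ t}) ∪ ((B ∩ Gs) ∩ {ω | t < τ ω}) = B ∩ Gs := by
      ext ω
      constructor
      · rintro (h | h) <;> exact h.1
      · intro h
        rcases le_or_gt (τ ω) t with h2 | h2
        · exact Or.inl ⟨h, h2⟩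
        · exact Or.inr ⟨h, h2⟩
    have hdisjU : Disjoint ((B ∩ Gs) ∩ {ω | τ ω ≤ t}) ((B ∩ Gs) ∩ {ω | t < τ ω}) := by
      refine Set.disjoint_left.mpr fun ω h1 h2 => ?_
      have h1' : τ ω ≤ t := h1.2
      have h2' : t < τ ω := h2.2
      exact not_le.mpr h2' h1'
    have hjoin : ∫ ω in (B ∩ Gs) ∩ {ω | τ ω ≤ t}, stoppedValue X (fun ω => (ρ ω : WithTop unitInterval)) ω ∂P₀
        + ∫ ω in (B ∩ Gs) ∩ {ω | t < τ ω}, stoppedValue X (fun ω => (ρ ω : WithTop unitInterval)) ω ∂P₀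
        = ∫ ω in B ∩ Gs, stoppedValue X (fun ω => (ρ ω : WithTop unitInterval)) ω ∂P₀ := by
      rw [← setIntegral_union hdisjU hU2mG (hint0 hρst).integrableOn (hint0 hρst).integrableOn,
        hUsplit]
    have hosB : ∫ ω in B ∩ Gs, stoppedValue X (fun ω => (ρ ω : WithTop unitInterval)) ω ∂P₀ ≤ ∫ ω in B ∩ Gs, X s ω ∂P₀ :=
      osB hsmart0 hui0 hrc hρst hs_le_ρ hBGs_Fs
    rw [hPhat_setInt (X t) B hBG (fun j => hXint t j),
      hPhat_setInt (X s) B hBG (fun j => hXint s j)]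
    calc ∑ j, ∫ ω in B ∩ A j, X t ω ∂(P j)
        = ∑ j, (∫ ω in D j, X t ω ∂(P j)
            + (∫ ω in C1 j, X t ω ∂(P j) + ∫ ω in C2 j, X t ω ∂(P j))) :=
          Finset.sum_congr rfl fun j _ => by
            rw [hsplit1 j (X t) (hXint t j), hsplit2 j (P j) (X t) (hXint t j)]
      _ ≤ ∑ j, (∫ ω in D j, X s ω ∂(P j)
            + (∫ ω in C1 j, stoppedValue X (fun ω => (ρ ω : WithTop unitInterval)) ω ∂P₀ + ∫ ω in C2 j, X t ω ∂P₀)) := by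
          refine Finset.sum_le_sum fun j _ => ?_
          refine add_le_add ((hsmartj j).setIntegral_le hst (hD_Fs j))
            (add_le_add ?_ (le_of_eq (hswapC2 j)))
          calc ∫ ω in C1 j, X t ω ∂(P j)
              ≤ ∫ ω in C1 j, stoppedValue X (fun ω => (ρ ω : WithTop unitInterval)) ω ∂(P j) :=
                osA (hsmartj j) (huij j) hrc hρst hρ_le_t (hC1ρ j)
            _ = ∫ ω in C1 j, stoppedValue X (fun ω => (ρ ω : WithTop unitInterval)) ω ∂P₀ := hswapC1 j
      _ = ∑ j, ∫ ω in D j, X s ω ∂(P j)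
            + (∑ j, ∫ ω in C1 j, stoppedValue X (fun ω => (ρ ω : WithTop unitInterval)) ω ∂P₀ + ∑ j, ∫ ω in C2 j, X t ω ∂P₀) := by
          rw [Finset.sum_add_distrib, Finset.sum_add_distrib]
      _ = ∑ j, ∫ ω in D j, X s ω ∂(P j) + ∫ ω in B ∩ Gs, stoppedValue X (fun ω => (ρ ω : WithTop unitInterval)) ω ∂P₀ := by
          rw [hsum1, hsum2, hU2congr, hjoin]
      _ ≤ ∑ j, ∫ ω in D j, X s ω ∂(P j) + ∫ ω in B ∩ Gs, X s ω ∂P₀ :=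
          add_le_add_right hosB _
      _ = ∑ j, ∫ ω in D j, X s ω ∂(P j) + ∑ j, ∫ ω in C j, X s ω ∂(P j) := by
          rw [← hsumC]
          congr 1
          exact Finset.sum_congr rfl fun j _ => (hswapC j).symm
      _ = ∑ j, ∫ ω in B ∩ A j, X s ω ∂(P j) := by
          rw [← Finset.sum_add_distrib]
          exact Finset.sum_congr rfl fun j _ => (hsplit1 j (X s) (hXint s j)).symm
  have hsubm : Submartingale (-X) F Phat := by
    refine submartingale_of_setIntegral_le (fun u => (hadp u).stronglyMeasurable.neg) (fun u => (hXhat u).neg) ?_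
    intro s t hst B hB
    have h := hineq s t hst B hB
    simp only [Pi.neg_apply]
    rw [integral_neg, integral_neg]
    linarith
  have h2 := hsubm.neg
  simpa [neg_neg] using h2
end
end

section
/- Let (Ω, 𝒢) be a measurable space, 𝒫 a nonempty set of probability measures on 𝒢, and p ∈ [1, ∞). Let (f_k)_{k≥1} be a sequence of 𝒢-measurable functions Ω → ℝ such that sup_{P∈𝒫} ∫ |f_k|^p dP < ∞ for each k and the sequence is Cauchy in the norm N(g) := (sup_{P∈𝒫} ∫ |g|^p dP)^{1/p}, i.e. for every ε > 0 there is N such that sup_{P∈𝒫} ∫ |f_k − f_l|^p dP ≤ ε for all k, l ≥ N. Then there exists a 𝒢-measurable function f : Ω → ℝ with sup_{P∈𝒫} ∫ |f|^p dP < ∞ such that sup_{P∈𝒫} ∫ |f_k − f|^p dP → 0 as k → ∞. -/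
open MeasureTheory Filter Topology

private lemma add_rpow_le (p : ℝ) (hp : 1 ≤ p) {a b : ℝ} (ha : 0 ≤ a) (hb : 0 ≤ b) :
    (a + b) ^ p ≤ 2 ^ p * (a ^ p + b ^ p) := by
  have hp0 : (0:ℝ) ≤ p := le_trans zero_le_one hp
  have h1 : a + b ≤ 2 * max a b := by
    rcases max_cases a b with ⟨h, h'⟩ | ⟨h, h'⟩ <;> rw [h] <;> linarith
  calc (a + b) ^ p ≤ (2 * max a b) ^ p :=
        Real.rpow_le_rpow (by linarith) h1 hp0
    _ = 2 ^ p * (max a b) ^ p := Real.mul_rpow (by norm_num) (le_max_of_le_left ha)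
    _ ≤ 2 ^ p * (a ^ p + b ^ p) := by
        refine mul_le_mul_of_nonneg_left ?_ (Real.rpow_nonneg (by norm_num) p)
        rcases max_cases a b with ⟨h, _⟩ | ⟨h, _⟩ <;> rw [h]
        · nlinarith [Real.rpow_nonneg hb p]
        · nlinarith [Real.rpow_nonneg ha p]

/-- completeness of the sup-over-measures `L^p` norm: a sequence of
measurable functions that is Cauchy for `g ↦ (sup_{P∈𝒮} ∫ |g|^p dP)^{1/p}` converges in
that norm to a measurable function with finite norm. -/
theorem stmt_11 {Ω : Type*} [𝒢 : MeasurableSpace Ω]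
    (𝒮 : Set (Measure Ω)) (h𝒮 : 𝒮.Nonempty)
    (hprob : ∀ P ∈ 𝒮, IsProbabilityMeasure P)
    (p : ℝ) (hp : 1 ≤ p)
    (f : ℕ → Ω → ℝ) (hmeas : ∀ k, Measurable (f k))
    (hbdd : ∀ k, (⨆ P ∈ 𝒮, ∫⁻ ω, ENNReal.ofReal (|f k ω| ^ p) ∂P) < ⊤)
    (hcauchy : ∀ ε : ℝ, 0 < ε → ∃ N : ℕ, ∀ k l : ℕ, N ≤ k → N ≤ l →
      (⨆ P ∈ 𝒮, ∫⁻ ω, ENNReal.ofReal (|f k ω - f l ω| ^ p) ∂P) ≤ ENNReal.ofReal ε) :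
    ∃ g : Ω → ℝ, Measurable g ∧
      (⨆ P ∈ 𝒮, ∫⁻ ω, ENNReal.ofReal (|g ω| ^ p) ∂P) < ⊤ ∧
      Tendsto (fun k => ⨆ P ∈ 𝒮, ∫⁻ ω, ENNReal.ofReal (|f k ω - g ω| ^ p) ∂P)
        atTop (nhds 0) := by
  have hp0 : (0:ℝ) < p := lt_of_lt_of_le one_pos hp
  -- measurability of integrands
  have hmint : ∀ (h : Ω → ℝ), Measurable h →
      Measurable (fun ω => ENNReal.ofReal (|h ω| ^ p)) := fun h hh =>
    ENNReal.measurable_ofReal.comp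
      ((Real.continuous_rpow_const hp0.le).measurable.comp hh.abs)
  -- the geometric scale
  set c : ℕ → ℝ := fun j => (2:ℝ)⁻¹ ^ j with hc
  have hcpos : ∀ j, 0 < c j := fun j => pow_pos (by norm_num) j
  have hεpos : ∀ j, 0 < c j ^ p * c j := fun j =>
    mul_pos (Real.rpow_pos_of_pos (hcpos j) p) (hcpos j)
  choose N hN using fun j => hcauchy (c j ^ p * c j) (hεpos j)
  -- the subsequence
  let n : ℕ → ℕ := fun j => Nat.rec (N 0) (fun j ih => max (ih + 1) (N (j+1))) j
  have hmono : StrictMono n :=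
    strictMono_nat_of_lt_succ fun j =>
      lt_of_lt_of_le (Nat.lt_succ_self _) (le_max_left _ _)
  have hnN : ∀ j, N j ≤ n j := by
    intro j; cases j with
    | zero => exact le_refl _
    | succ j => exact le_max_right _ _
  -- per-measure bound on increments
  have hdint : ∀ j, ∀ P ∈ 𝒮,
      ∫⁻ ω, ENNReal.ofReal (|f (n (j+1)) ω - f (n j) ω| ^ p) ∂P
        ≤ ENNReal.ofReal (c j ^ p * c j) := by
    intro j P hP
    refine le_trans ?_ (hN j (n (j+1)) (n j)
      (le_trans (hnN j) (hmono (Nat.lt_succ_self j)).le) (hnN j))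
    exact le_iSup₂ (f := fun P (_ : P ∈ 𝒮) =>
      ∫⁻ ω, ENNReal.ofReal (|f (n (j+1)) ω - f (n j) ω| ^ p) ∂P) P hP
  -- bad sets
  set A : ℕ → Set Ω := fun j => {ω | c j ≤ |f (n (j+1)) ω - f (n j) ω|} with hA
  have hAmeas : ∀ j, MeasurableSet (A j) := fun j =>
    measurableSet_le measurable_const ((hmeas _).sub (hmeas _)).abs
  have hAbound : ∀ j, ∀ P ∈ 𝒮, P (A j) ≤ ENNReal.ofReal (c j) := by
    intro j P hP
    have hsub : A j ⊆ {ω | ENNReal.ofReal (c j ^ p)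
        ≤ ENNReal.ofReal (|f (n (j+1)) ω - f (n j) ω| ^ p)} := by
      intro ω hω
      exact ENNReal.ofReal_le_ofReal
        (Real.rpow_le_rpow (hcpos j).le hω hp0.le)
    have hmark := mul_meas_ge_le_lintegral₀
      (μ := P) (((hmint _ ((hmeas (n (j+1))).sub (hmeas (n j)))).aemeasurable))
      (ENNReal.ofReal (c j ^ p))
    have h1 : ENNReal.ofReal (c j ^ p) * P (A j)
        ≤ ENNReal.ofReal (c j ^ p) * ENNReal.ofReal (c j) := by
      calc ENNReal.ofReal (c j ^ p) * P (A j)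
          ≤ ENNReal.ofReal (c j ^ p) * P {ω | ENNReal.ofReal (c j ^ p)
              ≤ ENNReal.ofReal (|f (n (j+1)) ω - f (n j) ω| ^ p)} := by
            exact mul_le_mul_right (measure_mono hsub) _
        _ ≤ ∫⁻ ω, ENNReal.ofReal (|f (n (j+1)) ω - f (n j) ω| ^ p) ∂P := hmark
        _ ≤ ENNReal.ofReal (c j ^ p * c j) := hdint j P hP
        _ = ENNReal.ofReal (c j ^ p) * ENNReal.ofReal (c j) :=
            ENNReal.ofReal_mul (Real.rpow_nonneg (hcpos j).le p)
    exact (ENNReal.mul_le_mul_iff_right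
      (ENNReal.ofReal_pos.mpr (Real.rpow_pos_of_pos (hcpos j) p)).ne'
      ENNReal.ofReal_ne_top).mp h1
  -- the convergence set
  set E : Set Ω := {ω | ∃ L, Tendsto (fun j => f (n j) ω) atTop (𝓝 L)} with hE
  have hEmeas : MeasurableSet E := measurableSet_exists_tendsto (l := atTop) fun j => hmeas (n j)
  -- outside limsup A, the subsequence converges
  have hEc_sub : Eᶜ ⊆ limsup A atTop := by
    intro ω hω
    by_contra hlim
    apply hω
    rw [mem_limsup_iff_frequently_mem, Filter.not_frequently] at hlim
    obtain ⟨J, hJ⟩ := eventually_atTop.mp hlim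
    have hcs : CauchySeq (fun i => f (n (i + J)) ω) := by
      apply cauchySeq_of_le_geometric (2⁻¹ : ℝ) (c J * 2) (by norm_num)
      intro i
      have := hJ (i + J) (by omega)
      simp only [A, Set.mem_setOf_eq, not_le] at this
      rw [Real.dist_eq]
      have hcalc : c (i + J) = c J * 2 * (2⁻¹:ℝ) ^ i * 2⁻¹ := by
        simp only [c, pow_add]; ring
      calc |f (n (i + J)) ω - f (n (i + 1 + J)) ω|
          = |f (n (i + J + 1)) ω - f (n (i + J)) ω| := by
            rw [abs_sub_comm]; ring_nf
        _ ≤ c (i + J) := le_of_lt this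
        _ ≤ c J * 2 * (2⁻¹:ℝ) ^ i := by
            rw [hcalc]
            nlinarith [pow_pos (show (0:ℝ) < 2⁻¹ by norm_num) i,
              mul_pos (mul_pos (hcpos J) (show (0:ℝ) < 2 by norm_num))
                (pow_pos (show (0:ℝ) < 2⁻¹ by norm_num) i)]
    obtain ⟨L, hL⟩ := cauchySeq_tendsto_of_complete hcs
    exact ⟨L, (tendsto_add_atTop_iff_nat J).mp hL⟩
  -- null sets
  have hEc_null : ∀ P ∈ 𝒮, P Eᶜ = 0 := by
    intro P hP
    refine measure_mono_null hEc_sub (measure_limsup_atTop_eq_zero ?_)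
    have hsum : (∑' j, P (A j)) ≤ ∑' j, ((2:ENNReal)⁻¹) ^ j := by
      refine ENNReal.tsum_le_tsum fun j => le_trans (hAbound j P hP) ?_
      rw [hc]
      rw [ENNReal.ofReal_pow (by norm_num),
        ENNReal.ofReal_inv_of_pos (by norm_num : (0:ℝ) < 2)]
      norm_num
    refine ne_top_of_le_ne_top ?_ hsum
    rw [ENNReal.tsum_geometric]
    norm_num
  -- construct the limit
  set fE : ℕ → Ω → ℝ := fun j => E.indicator (f (n j)) with hfE
  have hconv : ∀ ω, ∃ L, Tendsto (fun j => fE j ω) atTop (𝓝 L) := by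
    intro ω
    by_cases hω : ω ∈ E
    · have hω' : ∃ L, Tendsto (fun j => f (n j) ω) atTop (𝓝 L) := hω
      obtain ⟨L, hL⟩ := hω'
      exact ⟨L, by simpa [hfE, Set.indicator_of_mem hω] using hL⟩
    · exact ⟨0, by simp [hfE, Set.indicator_of_notMem hω, tendsto_const_nhds]⟩
  choose g hg using hconv
  have hgmeas : Measurable g :=
    measurable_of_tendsto_metrizable
      (fun j => (hmeas (n j)).indicator hEmeas) (tendsto_pi_nhds.mpr hg)
  have hgE : ∀ ω ∈ E, Tendsto (fun j => f (n j) ω) atTop (𝓝 (g ω)) := by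
    intro ω hω
    have := hg ω
    simpa [hfE, Set.indicator_of_mem hω] using this
  -- the key convergence estimate
  have key : ∀ ε : ℝ, 0 < ε → ∃ K : ℕ, ∀ k, K ≤ k →
      (⨆ P ∈ 𝒮, ∫⁻ ω, ENNReal.ofReal (|f k ω - g ω| ^ p) ∂P)
        ≤ ENNReal.ofReal ε := by
    intro ε hε
    obtain ⟨K, hK⟩ := hcauchy ε hε
    refine ⟨K, fun k hk => iSup₂_le fun P hP => ?_⟩
    calc ∫⁻ ω, ENNReal.ofReal (|f k ω - g ω| ^ p) ∂P
        = ∫⁻ ω, liminf (fun j => ENNReal.ofReal (|f k ω - f (n j) ω| ^ p)) atTop ∂P := by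
          refine lintegral_congr_ae ?_
          have hEae : ∀ᵐ ω ∂P, ω ∈ E :=
            ae_iff.mpr (hEc_null P hP)
          filter_upwards [hEae] with ω hω
          have htd : Tendsto (fun j => ENNReal.ofReal (|f k ω - f (n j) ω| ^ p))
              atTop (𝓝 (ENNReal.ofReal (|f k ω - g ω| ^ p))) := by
            refine (ENNReal.continuous_ofReal.tendsto _).comp ?_
            have h1 : Tendsto (fun j => |f k ω - f (n j) ω|) atTop
                (𝓝 (|f k ω - g ω|)) :=
              (continuous_abs.tendsto _).comp (tendsto_const_nhds.sub (hgE ω hω))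
            exact (Real.continuousAt_rpow_const _ p (Or.inr hp0.le)).tendsto.comp h1
          exact (htd.liminf_eq).symm
      _ ≤ liminf (fun j => ∫⁻ ω, ENNReal.ofReal (|f k ω - f (n j) ω| ^ p) ∂P) atTop :=
          lintegral_liminf_le fun j => hmint _ ((hmeas k).sub (hmeas (n j)))
      _ ≤ ENNReal.ofReal ε := by
          refine liminf_le_of_le (by isBoundedDefault) ?_
          refine fun b hb => ?_
          have hev : ∀ᶠ j in atTop,
              (∫⁻ ω, ENNReal.ofReal (|f k ω - f (n j) ω| ^ p) ∂P) ≤ ENNReal.ofReal ε := by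
            filter_upwards [eventually_ge_atTop K] with j hj
            refine le_trans (le_iSup₂ (f := fun P (_ : P ∈ 𝒮) =>
              ∫⁻ ω, ENNReal.ofReal (|f k ω - f (n j) ω| ^ p) ∂P) P hP) ?_
            exact hK k (n j) hk (le_trans hj (hmono.le_apply))
          obtain ⟨j, hb', hev'⟩ := (hb.and hev).exists
          exact le_trans hb' hev'
  -- finiteness of the norm of g
  have hfin : (⨆ P ∈ 𝒮, ∫⁻ ω, ENNReal.ofReal (|g ω| ^ p) ∂P) < ⊤ := by
    obtain ⟨K, hK⟩ := key 1 one_pos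
    have hgK := hK K le_rfl
    refine lt_of_le_of_lt (iSup₂_le fun P hP => ?_)
      (show ENNReal.ofReal (2 ^ p) *
        ((⨆ P ∈ 𝒮, ∫⁻ ω, ENNReal.ofReal (|f K ω| ^ p) ∂P) + ENNReal.ofReal 1) < ⊤ from
        ENNReal.mul_lt_top ENNReal.ofReal_lt_top
          (ENNReal.add_lt_top.mpr ⟨hbdd K, ENNReal.ofReal_lt_top⟩))
    calc ∫⁻ ω, ENNReal.ofReal (|g ω| ^ p) ∂P
        ≤ ∫⁻ ω, ENNReal.ofReal (2 ^ p) *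
            (ENNReal.ofReal (|f K ω| ^ p) + ENNReal.ofReal (|f K ω - g ω| ^ p)) ∂P := by
          refine lintegral_mono fun ω => ?_
          rw [← ENNReal.ofReal_add (Real.rpow_nonneg (abs_nonneg _) p)
            (Real.rpow_nonneg (abs_nonneg _) p),
            ← ENNReal.ofReal_mul (Real.rpow_nonneg (by norm_num) p)]
          refine ENNReal.ofReal_le_ofReal ?_
          calc |g ω| ^ p ≤ (|f K ω| + |f K ω - g ω|) ^ p := by
                refine Real.rpow_le_rpow (abs_nonneg _) ?_ hp0.le
                calc |g ω| = |f K ω - (f K ω - g ω)| := by ring_nf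
                  _ ≤ |f K ω| + |f K ω - g ω| := abs_sub _ _
            _ ≤ 2 ^ p * (|f K ω| ^ p + |f K ω - g ω| ^ p) :=
                add_rpow_le p hp (abs_nonneg _) (abs_nonneg _)
      _ = ENNReal.ofReal (2 ^ p) *
            ((∫⁻ ω, ENNReal.ofReal (|f K ω| ^ p) ∂P) +
              ∫⁻ ω, ENNReal.ofReal (|f K ω - g ω| ^ p) ∂P) := by
          rw [lintegral_const_mul _ (f := fun ω => ENNReal.ofReal (|f K ω| ^ p) + ENNReal.ofReal (|f K ω - g ω| ^ p)) ((hmint _ (hmeas K)).add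
            (hmint _ ((hmeas K).sub hgmeas))),
            lintegral_add_left (hmint _ (hmeas K))]
      _ ≤ ENNReal.ofReal (2 ^ p) *
            ((⨆ P ∈ 𝒮, ∫⁻ ω, ENNReal.ofReal (|f K ω| ^ p) ∂P) + ENNReal.ofReal 1) := by
          gcongr
          · exact le_iSup₂ (f := fun P (_ : P ∈ 𝒮) =>
              ∫⁻ ω, ENNReal.ofReal (|f K ω| ^ p) ∂P) P hP
          · exact le_trans (le_iSup₂ (f := fun P (_ : P ∈ 𝒮) =>
              ∫⁻ ω, ENNReal.ofReal (|f K ω - g ω| ^ p) ∂P) P hP) hgK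
  refine ⟨g, hgmeas, hfin, ?_⟩
  rw [ENNReal.tendsto_atTop_zero]
  intro ε hε
  obtain ⟨r, hr0, hrε⟩ : ∃ r : ℝ, 0 < r ∧ ENNReal.ofReal r ≤ ε := by
    rcases eq_or_ne ε ⊤ with rfl | hεtop
    · exact ⟨1, one_pos, le_top⟩
    · exact ⟨ε.toReal, ENNReal.toReal_pos hε.ne' hεtop,
        by rw [ENNReal.ofReal_toReal hεtop]⟩
  obtain ⟨K, hK⟩ := key r hr0
  exact ⟨K, fun k hk => le_trans (hK k hk) hrε⟩
end

section
/- Let (Ω, 𝒢, P) be a probability space with a filtration (F_t)_{t∈[0,1]}. Let M₀ be an F₀-measurable random variable with E[M₀²] < ∞; let N be a martingale with respect to (F_t) under P with continuous paths, N₀ = 0, and E[N_t²] < ∞ for all t; let K be an (F_t)-adapted process with continuous nondecreasing paths, K₀ = 0, and E[K₁²] < ∞. Define M_t := M₀ + N_t − K_t and assume E[ sup_{t∈[0,1]} M_t² ] < ∞. Then E[N₁²] + E[K₁²] ≤ 70 · E[ sup_{t∈[0,1]} M_t² ]; in particular E[K₁²] ≤ 54 · E[ sup_{t∈[0,1]}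 M_t² ]. -/
open MeasureTheory

lemma aux_mul_int {Ω : Type*} [MeasurableSpace Ω] {P : Measure Ω} {f g : Ω → ℝ}
    (hf : AEStronglyMeasurable f P) (hg : AEStronglyMeasurable g P)
    (hf2 : Integrable (fun ω => f ω ^ 2) P) (hg2 : Integrable (fun ω => g ω ^ 2) P) :
    Integrable (fun ω => f ω * g ω) P := by
  refine (hf2.add hg2).mono' (hf.mul hg) (ae_of_all _ fun ω => ?_)
  have h := sq_nonneg (|f ω| - |g ω|)
  simp only [Pi.add_apply]
  rw [Real.norm_eq_abs, abs_mul]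
  nlinarith [sq_abs (f ω), sq_abs (g ω), abs_nonneg (f ω), abs_nonneg (g ω)]

lemma aux_sub_sq_int {Ω : Type*} [MeasurableSpace Ω] {P : Measure Ω} {f g : Ω → ℝ}
    (hf : AEStronglyMeasurable f P) (hg : AEStronglyMeasurable g P)
    (hf2 : Integrable (fun ω => f ω ^ 2) P) (hg2 : Integrable (fun ω => g ω ^ 2) P) :
    Integrable (fun ω => (f ω - g ω) ^ 2) P := by
  have h := ((aux_mul_int hf hf hf2 hf2).sub
    ((aux_mul_int hf hg hf2 hg2).const_mul 2)).add (aux_mul_int hg hg hg2 hg2)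
  refine h.congr (ae_of_all _ fun ω => ?_)
  simp only [Pi.add_apply, Pi.sub_apply]
  ring

lemma aux_int_of_sq {Ω : Type*} [MeasurableSpace Ω] {P : Measure Ω} [IsFiniteMeasure P]
    {f : Ω → ℝ} (hf : AEStronglyMeasurable f P)
    (hf2 : Integrable (fun ω => f ω ^ 2) P) :
    Integrable f P := by
  refine (hf2.add (integrable_const 1)).mono' hf (ae_of_all _ fun ω => ?_)
  simp only [Pi.add_apply]
  rw [Real.norm_eq_abs]
  nlinarith [sq_abs (f ω), abs_nonneg (f ω)]

/-- for `M_t = M₀ + N_t − K_t` with `N` a square-integrable continuous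
martingale started at `0` and `K` a continuous nondecreasing adapted square-integrable
process started at `0`, one has
`E[N₁²] + E[K₁²] ≤ 70 E[sup_t M_t²]` and in particular `E[K₁²] ≤ 54 E[sup_t M_t²]`. -/
theorem stmt_14 {Ω : Type*} [𝒢 : MeasurableSpace Ω]
    (P : Measure Ω) [IsProbabilityMeasure P]
    (F : Filtration unitInterval 𝒢)
    (M₀ : Ω → ℝ) (hM₀meas : Measurable[F 0] M₀)
    (hM₀int : Integrable (fun ω => M₀ ω ^ 2) P)
    (N : unitInterval → Ω → ℝ) (hN : Martingale N F P)
    (hNcont : ∀ ω, Continuous fun t => N t ω)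
    (hN0 : ∀ ω, N 0 ω = 0)
    (hNint : ∀ t, Integrable (fun ω => N t ω ^ 2) P)
    (K : unitInterval → Ω → ℝ) (hKadp : Adapted F K)
    (hKcont : ∀ ω, Continuous fun t => K t ω)
    (hKmono : ∀ ω, Monotone fun t => K t ω)
    (hK0 : ∀ ω, K 0 ω = 0)
    (hKint : Integrable (fun ω => K 1 ω ^ 2) P)
    (M : unitInterval → Ω → ℝ) (hM : ∀ t ω, M t ω = M₀ ω + N t ω - K t ω)
    (hMsup : Integrable (fun ω => ⨆ t : unitInterval, M t ω ^ 2) P) :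
    (∫ ω, N 1 ω ^ 2 ∂P) + (∫ ω, K 1 ω ^ 2 ∂P)
        ≤ 70 * ∫ ω, (⨆ t : unitInterval, M t ω ^ 2) ∂P ∧
      (∫ ω, K 1 ω ^ 2 ∂P) ≤ 54 * ∫ ω, (⨆ t : unitInterval, M t ω ^ 2) ∂P := by
  classical
  set G : Ω → ℝ := fun ω => ⨆ t : unitInterval, M t ω ^ 2 with hGdef
  have hGint : Integrable G P := hMsup
  have hMcont : ∀ ω, Continuous fun t : unitInterval => M t ω := by
    intro ω
    have h : (fun t : unitInterval => M t ω) = fun t => M₀ ω + N t ω - K t ω := by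
      funext t; exact hM t ω
    rw [h]
    exact (continuous_const.add (hNcont ω)).sub (hKcont ω)
  have hBdd : ∀ ω, BddAbove (Set.range fun t : unitInterval => M t ω ^ 2) := fun ω =>
    (isCompact_range ((hMcont ω).pow 2)).bddAbove
  have hMG : ∀ (t : unitInterval) (ω), M t ω ^ 2 ≤ G ω := fun t ω => le_ciSup (hBdd ω) t
  have hGnn : ∀ ω, 0 ≤ G ω := fun ω => le_trans (sq_nonneg _) (hMG 0 ω)
  set S : Ω → ℝ := fun ω => Real.sqrt (G ω) with hSdef
  have hSnn : ∀ ω, 0 ≤ S ω := fun ω => Real.sqrt_nonneg _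
  have hSsq : ∀ ω, S ω ^ 2 = G ω := fun ω => Real.sq_sqrt (hGnn ω)
  have hMS : ∀ (t : unitInterval) (ω), |M t ω| ≤ S ω := by
    intro t ω
    rw [← Real.sqrt_sq_eq_abs]
    exact Real.sqrt_le_sqrt (hMG t ω)
  -- measurability
  have hGm : AEStronglyMeasurable G P := hGint.1
  have hSm : AEStronglyMeasurable S P :=
    Real.continuous_sqrt.comp_aestronglyMeasurable hGm
  have hSsqInt : Integrable (fun ω => S ω ^ 2) P := by
    have : (fun ω => S ω ^ 2) = G := funext hSsq
    rw [this]; exact hGint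
  have hKsm : ∀ t, AEStronglyMeasurable (K t) P := fun t =>
    ((hKadp t).mono (F.le t) le_rfl).aestronglyMeasurable
  have hNsm : ∀ t, AEStronglyMeasurable (N t) P := fun t =>
    ((hN.stronglyAdapted t).mono (F.le t)).aestronglyMeasurable
  have hM₀sm : AEStronglyMeasurable M₀ P :=
    (hM₀meas.mono (F.le 0) le_rfl).aestronglyMeasurable
  have hMsm : ∀ t, AEStronglyMeasurable (M t) P := by
    intro t
    have h : M t = fun ω => M₀ ω + N t ω - K t ω := funext fun ω => hM t ω
    rw [h]
    exact (hM₀sm.add (hNsm t)).sub (hKsm t)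
  -- nonnegativity and monotonicity facts for K
  have hKnn : ∀ (t : unitInterval) (ω), 0 ≤ K t ω := by
    intro t ω
    have h0 : (0 : unitInterval) ≤ t := t.2.1
    have := hKmono ω h0
    simpa [hK0 ω] using this
  have hKle : ∀ (t : unitInterval) (ω), K t ω ≤ K 1 ω := fun t ω =>
    hKmono ω (t.2.2 : t ≤ 1)
  have hKsqm : ∀ t, AEStronglyMeasurable (fun ω => K t ω ^ 2) P := by
    intro t
    have : (fun ω => K t ω ^ 2) = fun ω => K t ω * K t ω := by funext ω; ring
    rw [this]; exact (hKsm t).mul (hKsm t)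
  have hKsq : ∀ t, Integrable (fun ω => K t ω ^ 2) P := by
    intro t
    refine hKint.mono' (hKsqm t) (ae_of_all _ fun ω => ?_)
    rw [Real.norm_eq_abs, abs_of_nonneg (sq_nonneg _)]
    have h1 := hKnn t ω
    have h2 := hKle t ω
    nlinarith
  -- the martingale identity: for F t-measurable square-integrable Z, E[N₁ Z] = E[N_t Z]
  have hNint1 : Integrable (N 1) P := hN.integrable 1
  have hA : ∀ (t : unitInterval) (Z : Ω → ℝ), StronglyMeasurable[F t] Z →
      Integrable (fun ω => Z ω ^ 2) P →
      ∫ ω, N 1 ω * Z ω ∂P = ∫ ω, N t ω * Z ω ∂P := by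
    intro t Z hZsm hZ2
    have hm : F t ≤ 𝒢 := F.le t
    have hZae : AEStronglyMeasurable Z P := (hZsm.mono hm).aestronglyMeasurable
    have h1 : Integrable (Z * N 1) P := by
      have h := aux_mul_int hZae (hNsm 1) hZ2 (hNint 1)
      exact h.congr (ae_of_all _ fun ω => rfl)
    have h2 : P[Z * N 1|F t] =ᵐ[P] Z * P[N 1|F t] :=
      condExp_mul_of_stronglyMeasurable_left hZsm h1 hNint1
    have h3 : P[N 1|F t] =ᵐ[P] N t := hN.condExp_ae_eq (t.2.2 : t ≤ 1)
    calc ∫ ω, N 1 ω * Z ω ∂P = ∫ ω, (Z * N 1) ω ∂P := by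
          refine integral_congr_ae (ae_of_all _ fun ω => ?_)
          simp [Pi.mul_apply, mul_comm]
      _ = ∫ ω, (P[Z * N 1|F t]) ω ∂P := (integral_condExp hm).symm
      _ = ∫ ω, Z ω * (P[N 1|F t]) ω ∂P := integral_congr_ae (h2.mono fun ω h => by
          simpa [Pi.mul_apply] using h)
      _ = ∫ ω, N t ω * Z ω ∂P := integral_congr_ae (h3.mono fun ω h => by
          simp only []
          rw [h, mul_comm])
  -- the uniform partition
  set u : ℕ → ℕ → unitInterval := fun n j => Set.projIcc (0:ℝ) 1 zero_le_one ((j:ℝ)/(n:ℝ)) with hudef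
  have humono : ∀ n, Monotone (u n) := by
    intro n a b hab
    refine Set.monotone_projIcc zero_le_one ?_
    rw [div_eq_mul_inv, div_eq_mul_inv]
    exact mul_le_mul_of_nonneg_right (by exact_mod_cast hab) (by positivity)
  have hu0 : ∀ n, u n 0 = (0 : unitInterval) := by
    intro n
    apply Subtype.ext
    simp [hudef, Set.projIcc]
  have hu1 : ∀ n, 1 ≤ n → u n n = (1 : unitInterval) := by
    intro n hn
    apply Subtype.ext
    have hn0 : (n:ℝ) ≠ 0 := by exact_mod_cast Nat.one_le_iff_ne_zero.mp hn
    simp [hudef, Set.projIcc, div_self hn0]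
  have hucoe : ∀ n j, 1 ≤ n → j ≤ n → ((u n j : unitInterval) : ℝ) = (j:ℝ)/(n:ℝ) := by
    intro n j hn hj
    have hn0 : (0:ℝ) < n := by exact_mod_cast hn
    have hmem : (j:ℝ)/(n:ℝ) ∈ Set.Icc (0:ℝ) 1 := by
      constructor
      · positivity
      · rw [div_le_one hn0]; exact_mod_cast hj
    rw [hudef]
    simp only []
    rw [Set.projIcc_of_mem zero_le_one hmem]
  -- square integrability of M and useful products
  have hMsq : ∀ t, Integrable (fun ω => M t ω ^ 2) P := by
    intro t
    have hm : AEStronglyMeasurable (fun ω => M t ω ^ 2) P := by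
      have h : (fun ω => M t ω ^ 2) = fun ω => M t ω * M t ω := by funext ω; ring
      rw [h]; exact (hMsm t).mul (hMsm t)
    refine hGint.mono' hm (ae_of_all _ fun ω => ?_)
    rw [Real.norm_eq_abs, abs_of_nonneg (sq_nonneg _)]
    exact hMG t ω
  -- remainder sums
  set R : ℕ → Ω → ℝ :=
    fun n ω => ∑ j ∈ Finset.range n, (K (u n (j+1)) ω - K (u n j) ω)^2 with hRdef
  -- the key estimate for each n
  have hkey : ∀ n : ℕ, 1 ≤ n →
      ∫ ω, K 1 ω ^ 2 ∂P ≤ 4 * (∫ ω, S ω * K 1 ω ∂P) + ∫ ω, R n ω ∂P := by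
    intro n hn
    have hΔsm : ∀ j, AEStronglyMeasurable (fun ω => K (u n (j+1)) ω - K (u n j) ω) P :=
      fun j => (hKsm _).sub (hKsm _)
    have hΔsq : ∀ j, Integrable (fun ω => (K (u n (j+1)) ω - K (u n j) ω)^2) P :=
      fun j => aux_sub_sq_int (hKsm _) (hKsm _) (hKsq _) (hKsq _)
    have hΔnn : ∀ j ω, 0 ≤ K (u n (j+1)) ω - K (u n j) ω := fun j ω =>
      sub_nonneg.2 (hKmono ω (humono n (Nat.le_succ j)))
    -- pointwise summation identity
    have hid : ∀ ω, K 1 ω ^ 2 = ∑ j ∈ Finset.range n,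
        (K (u n (j+1)) ω - K (u n j) ω) *
          (2 * K 1 ω - K (u n (j+1)) ω - K (u n j) ω) := by
      intro ω
      have ht := Finset.sum_range_sub
        (f := fun j => 2 * K 1 ω * K (u n j) ω - K (u n j) ω ^ 2) (n := n)
      calc K 1 ω ^ 2
          = (2 * K 1 ω * K (u n n) ω - K (u n n) ω ^ 2)
            - (2 * K 1 ω * K (u n 0) ω - K (u n 0) ω ^ 2) := by
            rw [hu1 n hn, hu0 n, hK0 ω]; ring
        _ = ∑ j ∈ Finset.range n,
            ((2 * K 1 ω * K (u n (j+1)) ω - K (u n (j+1)) ω ^ 2)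
              - (2 * K 1 ω * K (u n j) ω - K (u n j) ω ^ 2)) := ht.symm
        _ = _ := Finset.sum_congr rfl (fun j _ => by ring)
    -- integrability of the summands
    have hgsq : ∀ j, Integrable
        (fun ω => (2 * K 1 ω - K (u n (j+1)) ω - K (u n j) ω)^2) P := by
      intro j
      have hm : AEStronglyMeasurable
          (fun ω => (2 * K 1 ω - K (u n (j+1)) ω - K (u n j) ω)^2) P := by
        have h : (fun ω => (2 * K 1 ω - K (u n (j+1)) ω - K (u n j) ω)^2)
            = fun ω => (2 * K 1 ω - K (u n (j+1)) ω - K (u n j) ω) *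
                (2 * K 1 ω - K (u n (j+1)) ω - K (u n j) ω) := by funext ω; ring
        rw [h]
        exact (((hKsm 1).const_mul 2).sub (hKsm _) |>.sub (hKsm _)).mul
          (((hKsm 1).const_mul 2).sub (hKsm _) |>.sub (hKsm _))
      refine (hKint.const_mul 16).mono' hm (ae_of_all _ fun ω => ?_)
      rw [Real.norm_eq_abs, abs_of_nonneg (sq_nonneg _)]
      have h1 := hKnn (u n (j+1)) ω
      have h2 := hKnn (u n j) ω
      have h3 := hKle (u n (j+1)) ω
      have h4 := hKle (u n j) ω
      have h5 := hKnn 1 ω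
      nlinarith
    have hterm_int : ∀ j, Integrable (fun ω =>
        (K (u n (j+1)) ω - K (u n j) ω) *
          (2 * K 1 ω - K (u n (j+1)) ω - K (u n j) ω)) P := fun j =>
      aux_mul_int (hΔsm j)
        ((((hKsm 1).const_mul 2).sub (hKsm _)).sub (hKsm _)) (hΔsq j) (hgsq j)
    -- per-term estimate
    have hterm : ∀ j, j < n →
        (∫ ω, (K (u n (j+1)) ω - K (u n j) ω) *
            (2 * K 1 ω - K (u n (j+1)) ω - K (u n j) ω) ∂P)
          ≤ 4 * (∫ ω, S ω * (K (u n (j+1)) ω - K (u n j) ω) ∂P)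
            + ∫ ω, (K (u n (j+1)) ω - K (u n j) ω)^2 ∂P := by
      intro j hj
      set t : unitInterval := u n j with htdef
      set t' : unitInterval := u n (j+1) with ht'def
      set Z : Ω → ℝ := fun ω => K t' ω - K t ω with hZdef
      have hZsmF : StronglyMeasurable[F t'] Z :=
        ((hKadp t').sub ((hKadp t).mono (F.mono (humono n (Nat.le_succ j))) le_rfl)).stronglyMeasurable
      have hSZ : Integrable (fun ω => S ω * Z ω) P :=
        aux_mul_int hSm (hΔsm j) hSsqInt (hΔsq j)
      have hMdiff_sq : Integrable (fun ω => (M t' ω - M 1 ω)^2) P :=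
        aux_sub_sq_int (hMsm t') (hMsm 1) (hMsq t') (hMsq 1)
      have hMdiffZ : Integrable (fun ω => (M t' ω - M 1 ω) * Z ω) P :=
        aux_mul_int ((hMsm t').sub (hMsm 1)) (hΔsm j) hMdiff_sq (hΔsq j)
      have hN1Z : Integrable (fun ω => N 1 ω * Z ω) P :=
        aux_mul_int (hNsm 1) (hΔsm j) (hNint 1) (hΔsq j)
      have hNt'Z : Integrable (fun ω => N t' ω * Z ω) P :=
        aux_mul_int (hNsm t') (hΔsm j) (hNint t') (hΔsq j)
      have hK1t'Z : Integrable (fun ω => (K 1 ω - K t' ω) * Z ω) P :=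
        aux_mul_int ((hKsm 1).sub (hKsm t'))
          (hΔsm j) (aux_sub_sq_int (hKsm 1) (hKsm t') (hKsq 1) (hKsq t')) (hΔsq j)
      -- martingale step
      have hmart : ∫ ω, N 1 ω * Z ω ∂P = ∫ ω, N t' ω * Z ω ∂P :=
        hA t' Z hZsmF (hΔsq j)
      have hsub : Integrable (fun ω => N 1 ω * Z ω - N t' ω * Z ω) P :=
        hN1Z.sub hNt'Z
      have hsplit : ∫ ω, (K 1 ω - K t' ω) * Z ω ∂P
          = (∫ ω, (N 1 ω * Z ω - N t' ω * Z ω) ∂P)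
            + ∫ ω, (M t' ω - M 1 ω) * Z ω ∂P := by
        calc ∫ ω, (K 1 ω - K t' ω) * Z ω ∂P
            = ∫ ω, ((N 1 ω * Z ω - N t' ω * Z ω) + (M t' ω - M 1 ω) * Z ω) ∂P := by
              refine integral_congr_ae (ae_of_all _ fun ω => ?_)
              show (K 1 ω - K t' ω) * Z ω = _
              have h1 := hM 1 ω
              have h2 := hM t' ω
              have h3 : K 1 ω - K t' ω = N 1 ω - N t' ω + (M t' ω - M 1 ω) := by linarith
              rw [h3]; ring
          _ = _ := integral_add hsub hMdiffZ
      have hzero : ∫ ω, (N 1 ω * Z ω - N t' ω * Z ω) ∂P = 0 := by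
        rw [integral_sub hN1Z hNt'Z, hmart, sub_self]
      have hMbound : ∫ ω, (M t' ω - M 1 ω) * Z ω ∂P ≤ 2 * ∫ ω, S ω * Z ω ∂P := by
        rw [← integral_const_mul]
        refine integral_mono hMdiffZ (hSZ.const_mul 2) (fun ω => ?_)
        have h1 : M t' ω - M 1 ω ≤ 2 * S ω := by
          have := hMS t' ω; have := hMS 1 ω
          have := abs_le.mp (hMS t' ω); have := abs_le.mp (hMS 1 ω)
          linarith [(abs_le.mp (hMS t' ω)).2, (abs_le.mp (hMS 1 ω)).1]
        calc (M t' ω - M 1 ω) * Z ω ≤ 2 * S ω * Z ω :=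
              mul_le_mul_of_nonneg_right h1 (hΔnn j ω)
          _ = 2 * (S ω * Z ω) := by ring
      have hdecomp : ∫ ω, (K (u n (j+1)) ω - K (u n j) ω) *
            (2 * K 1 ω - K (u n (j+1)) ω - K (u n j) ω) ∂P
          = 2 * (∫ ω, (K 1 ω - K t' ω) * Z ω ∂P)
            + ∫ ω, (K (u n (j+1)) ω - K (u n j) ω)^2 ∂P := by
        have h2K : Integrable (fun ω => 2 * ((K 1 ω - K t' ω) * Z ω)) P :=
          hK1t'Z.const_mul 2
        calc ∫ ω, (K (u n (j+1)) ω - K (u n j) ω) *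
              (2 * K 1 ω - K (u n (j+1)) ω - K (u n j) ω) ∂P
            = ∫ ω, (2 * ((K 1 ω - K t' ω) * Z ω)
                + (K (u n (j+1)) ω - K (u n j) ω)^2) ∂P := by
              refine integral_congr_ae (ae_of_all _ fun ω => ?_)
              show (K (u n (j+1)) ω - K (u n j) ω) * _ = _
              simp only [hZdef, ht'def, htdef]
              ring
          _ = (∫ ω, 2 * ((K 1 ω - K t' ω) * Z ω) ∂P)
              + ∫ ω, (K (u n (j+1)) ω - K (u n j) ω)^2 ∂P :=
            integral_add h2K (hΔsq j)
          _ = 2 * (∫ ω, (K 1 ω - K t' ω) * Z ω ∂P)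
              + ∫ ω, (K (u n (j+1)) ω - K (u n j) ω)^2 ∂P := by
            rw [integral_const_mul]
      rw [hdecomp, hsplit, hzero, zero_add]
      have h4 : 2 * (∫ ω, (M t' ω - M 1 ω) * Z ω ∂P)
          ≤ 4 * ∫ ω, S ω * Z ω ∂P := by linarith
      linarith
    -- summing up
    have hsum1 : ∫ ω, K 1 ω ^ 2 ∂P = ∑ j ∈ Finset.range n,
        ∫ ω, (K (u n (j+1)) ω - K (u n j) ω) *
          (2 * K 1 ω - K (u n (j+1)) ω - K (u n j) ω) ∂P := by
      rw [← integral_finset_sum _ (fun j _ => hterm_int j)]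
      exact integral_congr_ae (ae_of_all _ fun ω => hid ω)
    have hsum2 : ∑ j ∈ Finset.range n, ∫ ω, S ω * (K (u n (j+1)) ω - K (u n j) ω) ∂P
        = ∫ ω, S ω * K 1 ω ∂P := by
      have hSK : ∀ j, Integrable (fun ω => S ω * K (u n j) ω) P := fun j =>
        aux_mul_int hSm (hKsm _) hSsqInt (hKsq _)
      have hstep : ∀ j, ∫ ω, S ω * (K (u n (j+1)) ω - K (u n j) ω) ∂P
          = (∫ ω, S ω * K (u n (j+1)) ω ∂P) - ∫ ω, S ω * K (u n j) ω ∂P := by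
        intro j
        rw [← integral_sub (hSK (j+1)) (hSK j)]
        exact integral_congr_ae (ae_of_all _ fun ω => by ring)
      calc ∑ j ∈ Finset.range n, ∫ ω, S ω * (K (u n (j+1)) ω - K (u n j) ω) ∂P
          = ∑ j ∈ Finset.range n, ((∫ ω, S ω * K (u n (j+1)) ω ∂P)
              - ∫ ω, S ω * K (u n j) ω ∂P) := Finset.sum_congr rfl (fun j _ => hstep j)
        _ = (∫ ω, S ω * K (u n n) ω ∂P) - ∫ ω, S ω * K (u n 0) ω ∂P :=
            Finset.sum_range_sub (fun j => ∫ ω, S ω * K (u n j) ω ∂P) n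
        _ = ∫ ω, S ω * K 1 ω ∂P := by
            rw [hu1 n hn, hu0 n]
            have h0 : ∫ ω, S ω * K 0 ω ∂P = 0 := by
              rw [← integral_zero Ω ℝ (μ := P)]
              refine integral_congr_ae (ae_of_all _ fun ω => ?_)
              show S ω * K 0 ω = 0
              rw [hK0 ω, mul_zero]
            rw [h0, sub_zero]
    have hsum3 : ∑ j ∈ Finset.range n, ∫ ω, (K (u n (j+1)) ω - K (u n j) ω)^2 ∂P
        = ∫ ω, R n ω ∂P := by
      rw [hRdef, ← integral_finset_sum _ (fun j _ => hΔsq j)]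
    calc ∫ ω, K 1 ω ^ 2 ∂P
        = ∑ j ∈ Finset.range n, ∫ ω, (K (u n (j+1)) ω - K (u n j) ω) *
            (2 * K 1 ω - K (u n (j+1)) ω - K (u n j) ω) ∂P := hsum1
      _ ≤ ∑ j ∈ Finset.range n,
            (4 * (∫ ω, S ω * (K (u n (j+1)) ω - K (u n j) ω) ∂P)
              + ∫ ω, (K (u n (j+1)) ω - K (u n j) ω)^2 ∂P) :=
          Finset.sum_le_sum (fun j hj => hterm j (Finset.mem_range.mp hj))
      _ = 4 * (∑ j ∈ Finset.range n,
              ∫ ω, S ω * (K (u n (j+1)) ω - K (u n j) ω) ∂P)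
            + ∑ j ∈ Finset.range n, ∫ ω, (K (u n (j+1)) ω - K (u n j) ω)^2 ∂P := by
          rw [Finset.sum_add_distrib, Finset.mul_sum]
      _ = 4 * (∫ ω, S ω * K 1 ω ∂P) + ∫ ω, R n ω ∂P := by rw [hsum2, hsum3]
  -- measurability and bounds for R
  have hRsm : ∀ n, AEStronglyMeasurable (R n) P := by
    intro n
    refine Finset.aestronglyMeasurable_fun_sum _ (fun j _ => ?_)
    have h : (fun ω => (K (u n (j+1)) ω - K (u n j) ω)^2)
        = fun ω => (K (u n (j+1)) ω - K (u n j) ω) * (K (u n (j+1)) ω - K (u n j) ω) := by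
      funext ω; ring
    rw [h]
    exact ((hKsm _).sub (hKsm _)).mul ((hKsm _).sub (hKsm _))
  have hΔnn' : ∀ (n j : ℕ) (ω : Ω), 0 ≤ K (u n (j+1)) ω - K (u n j) ω := fun n j ω =>
    sub_nonneg.2 (hKmono ω (humono n (Nat.le_succ j)))
  have hRnn : ∀ n ω, 0 ≤ R n ω := fun n ω =>
    Finset.sum_nonneg (fun j _ => sq_nonneg _)
  have hRbound : ∀ n ω, R n ω ≤ K 1 ω ^ 2 := by
    intro n ω
    have h1 : R n ω ≤ ∑ j ∈ Finset.range n, (K (u n (j+1)) ω - K (u n j) ω) * K 1 ω := by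
      refine Finset.sum_le_sum (fun j _ => ?_)
      have hΔK : K (u n (j+1)) ω - K (u n j) ω ≤ K 1 ω := by
        have h2 := hKle (u n (j+1)) ω
        have h3 := hKnn (u n j) ω
        linarith
      have h4 := hΔnn' n j ω
      nlinarith
    have h2 : ∑ j ∈ Finset.range n, (K (u n (j+1)) ω - K (u n j) ω) * K 1 ω
        = (K (u n n) ω - K (u n 0) ω) * K 1 ω := by
      rw [← Finset.sum_mul, Finset.sum_range_sub (fun j => K (u n j) ω)]
    have h3 : (K (u n n) ω - K (u n 0) ω) * K 1 ω ≤ K 1 ω ^ 2 := by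
      have h4 := hKle (u n n) ω
      have h5 := hKnn (u n 0) ω
      have h6 := hKnn 1 ω
      nlinarith
    linarith
  -- pointwise convergence of R to 0
  have hRtend0 : ∀ ω, Filter.Tendsto (fun n => R n ω) Filter.atTop (nhds 0) := by
    intro ω
    rw [Metric.tendsto_atTop]
    intro ε hε
    have hucK : UniformContinuous fun t : unitInterval => K t ω :=
      CompactSpace.uniformContinuous_of_continuous (hKcont ω)
    have hK1nn := hKnn 1 ω
    set ε' : ℝ := ε / (K 1 ω + 1) with hε'
    have hε'pos : 0 < ε' := by positivity
    obtain ⟨δ, hδpos, hδ⟩ := Metric.uniformContinuous_iff.mp hucK ε' hε'pos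
    obtain ⟨n₀, hn₀⟩ := exists_nat_gt (1/δ)
    refine ⟨max n₀ 1, fun n hn => ?_⟩
    have hn1 : 1 ≤ n := le_trans (le_max_right _ _) hn
    have hnpos : (0:ℝ) < n := by exact_mod_cast hn1
    have hnδ : 1/(n:ℝ) < δ := by
      have h1 : (n₀:ℝ) ≤ n := by exact_mod_cast le_trans (le_max_left _ _) hn
      rw [div_lt_iff₀ hnpos]
      have h2 : 1/δ < (n:ℝ) := lt_of_lt_of_le hn₀ h1
      rw [div_lt_iff₀ hδpos] at h2
      linarith [mul_comm δ (n:ℝ)]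
    have hsmall : ∀ j, j < n → K (u n (j+1)) ω - K (u n j) ω < ε' := by
      intro j hj
      have hd : dist (u n (j+1)) (u n j) < δ := by
        rw [Subtype.dist_eq, Real.dist_eq, hucoe n (j+1) hn1 hj, hucoe n j hn1 (le_of_lt hj)]
        have : ((j:ℝ)+1)/(n:ℝ) - (j:ℝ)/(n:ℝ) = 1/(n:ℝ) := by
          field_simp; ring
        rw [show (((j:ℕ)+1 : ℕ) : ℝ) = (j:ℝ)+1 by push_cast; ring, this]
        rw [abs_of_pos (by positivity)]
        exact hnδ
      have h5 := hδ hd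
      rw [Real.dist_eq] at h5
      calc K (u n (j+1)) ω - K (u n j) ω ≤ |K (u n (j+1)) ω - K (u n j) ω| := le_abs_self _
        _ < ε' := h5
    have hRle : R n ω ≤ ε' * K 1 ω := by
      have h1 : R n ω ≤ ∑ j ∈ Finset.range n, ε' * (K (u n (j+1)) ω - K (u n j) ω) := by
        refine Finset.sum_le_sum (fun j hj => ?_)
        have h2 := hsmall j (Finset.mem_range.mp hj)
        have h3 := hΔnn' n j ω
        nlinarith
      have h2 : ∑ j ∈ Finset.range n, ε' * (K (u n (j+1)) ω - K (u n j) ω)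
          = ε' * (K (u n n) ω - K (u n 0) ω) := by
        rw [← Finset.mul_sum, Finset.sum_range_sub (fun j => K (u n j) ω)]
      rw [h2, hu1 n hn1, hu0 n, hK0 ω, sub_zero] at h1
      exact h1
    have hfin : ε' * (K 1 ω + 1) = ε := div_mul_cancel₀ _ (by positivity)
    rw [Real.dist_eq, sub_zero, abs_of_nonneg (hRnn n ω)]
    nlinarith [hRle, hε'pos]
  have hRint : ∀ n, Integrable (R n) P := fun n =>
    hKint.mono' (hRsm n) (ae_of_all _ fun ω => by
      rw [Real.norm_eq_abs, abs_of_nonneg (hRnn n ω)]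
      exact hRbound n ω)
  have hRtend : Filter.Tendsto (fun n => ∫ ω, R n ω ∂P) Filter.atTop (nhds 0) := by
    have h := tendsto_integral_of_dominated_convergence (μ := P) (F := R)
      (f := fun _ => (0:ℝ)) (fun ω => K 1 ω ^ 2) hRsm hKint
      (fun n => ae_of_all _ fun ω => by
        rw [Real.norm_eq_abs, abs_of_nonneg (hRnn n ω)]
        exact hRbound n ω)
      (ae_of_all _ fun ω => hRtend0 ω)
    simpa using h
  -- conclude E[K₁²] ≤ 16 E[G]
  have hSK1 : Integrable (fun ω => S ω * K 1 ω) P := aux_mul_int hSm (hKsm 1) hSsqInt hKint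
  have hGintval : 0 ≤ ∫ ω, G ω ∂P := integral_nonneg hGnn
  have h16 : ∫ ω, K 1 ω ^ 2 ∂P ≤ 16 * ∫ ω, G ω ∂P := by
    have hle0 : (∫ ω, K 1 ω ^ 2 ∂P) - 4 * (∫ ω, S ω * K 1 ω ∂P) ≤ 0 := by
      refine ge_of_tendsto hRtend ?_
      filter_upwards [Filter.eventually_ge_atTop 1] with n hn
      linarith [hkey n hn]
    have hAM : 4 * (∫ ω, S ω * K 1 ω ∂P)
        ≤ 8 * (∫ ω, G ω ∂P) + (1/2) * ∫ ω, K 1 ω ^ 2 ∂P := by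
      have h1 : ∫ ω, 4 * (S ω * K 1 ω) ∂P
          ≤ ∫ ω, (8 * G ω + (1/2) * K 1 ω ^ 2) ∂P := by
        refine integral_mono (hSK1.const_mul 4)
          ((hGint.const_mul 8).add (hKint.const_mul (1/2))) (fun ω => ?_)
        show 4 * (S ω * K 1 ω) ≤ 8 * G ω + (1/2) * K 1 ω ^ 2
        have h2 := sq_nonneg (4 * S ω - K 1 ω)
        have h3 := hSsq ω
        nlinarith
      rw [integral_const_mul] at h1
      rw [integral_add (hGint.const_mul 8) (hKint.const_mul (1/2)),
        integral_const_mul, integral_const_mul] at h1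
      linarith
    linarith
  -- conclude E[N₁²] ≤ 54 E[G]
  have hM1le : ∫ ω, M 1 ω ^ 2 ∂P ≤ ∫ ω, G ω ∂P :=
    integral_mono (hMsq 1) hGint (fun ω => hMG 1 ω)
  have hM0le : ∫ ω, M₀ ω ^ 2 ∂P ≤ ∫ ω, G ω ∂P := by
    refine integral_mono hM₀int hGint (fun ω => ?_)
    show M₀ ω ^ 2 ≤ G ω
    have h1 : M₀ ω = M 0 ω := by
      rw [hM 0 ω, hN0 ω, hK0 ω]; ring
    rw [h1]; exact hMG 0 ω
  have hNle : ∫ ω, N 1 ω ^ 2 ∂P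
      ≤ 3 * (∫ ω, M 1 ω ^ 2 ∂P) + 3 * (∫ ω, M₀ ω ^ 2 ∂P) + 3 * ∫ ω, K 1 ω ^ 2 ∂P := by
    have ha : Integrable (fun ω => 3 * M 1 ω ^ 2) P := (hMsq 1).const_mul 3
    have hb : Integrable (fun ω => 3 * M₀ ω ^ 2) P := hM₀int.const_mul 3
    have hc : Integrable (fun ω => 3 * K 1 ω ^ 2) P := hKint.const_mul 3
    have hab : Integrable (fun ω => 3 * M 1 ω ^ 2 + 3 * M₀ ω ^ 2) P := ha.add hb
    have h1 : ∫ ω, N 1 ω ^ 2 ∂P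
        ≤ ∫ ω, (3 * M 1 ω ^ 2 + 3 * M₀ ω ^ 2 + 3 * K 1 ω ^ 2) ∂P := by
      refine integral_mono (hNint 1)
        (hab.add hc)
        (fun ω => ?_)
      show N 1 ω ^ 2 ≤ 3 * M 1 ω ^ 2 + 3 * M₀ ω ^ 2 + 3 * K 1 ω ^ 2
      have h2 := hM 1 ω
      have h3 : N 1 ω = M 1 ω - M₀ ω + K 1 ω := by linarith
      rw [h3]
      nlinarith [sq_nonneg (M 1 ω + M₀ ω), sq_nonneg (M 1 ω - K 1 ω), sq_nonneg (M₀ ω + K 1 ω),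
        sq_nonneg (M 1 ω - M₀ ω), sq_nonneg (M 1 ω + K 1 ω), sq_nonneg (M₀ ω - K 1 ω)]
    rw [integral_add hab hc, integral_add ha hb,
      integral_const_mul, integral_const_mul, integral_const_mul] at h1
    exact h1
  constructor
  · linarith
  · linarith
end
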